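/- arXiv:2403.08253 — 8 statements merged into one kernel-verified Lean document; each statement's English description precedes it below -/
import Mathlib

section
/- Let a < b, let f : ℝ → ℝ → ℝ be continuous and satisfy |f(t,u₁) − f(t,u₂)| ≤ L|u₁ − u₂| for all t ∈ [a,b] and u₁,u₂ ∈ ℝ, and let u : [a,b] → ℝ be continuously differentiable with u'(t) = f(t,u(t)) on [a,b]. Fix reals b₁, b₂, c₂, a₂₁ with b₁ + b₂ = 1, a₂₁ = c₂ and b₂c₂ = 1/2, and fix M ≥ 0. For each N ≥ 1 set h = (b−a)/N, t_n = a + nh, choose shape parameters e_n ∈ ℝ with |e_n| ≤ M for 0 ≤ n ≤ N−1, and define v₀ = u(a) and v_{n+1} = v_n + h(b₁k₁ + b₂k₂), where k₁ = f(t_n, v_n) and k₂ = f(t_n + c₂h, v_n·exp(−e_n(a₂₁h)²) + h a₂₁ k₁). Then max_{0 ≤ n ≤ N} |v_n − u(t_n)| → 0 as N → ∞ (uniformly over all admissible choices of the e_n). -/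
/-!
Write `v_{n+1} = v_n + h Φ_n(v_n)`. Since `b₁ + b₂ = 1` and the stage point
`(t + c₂h, x e^{-e(a₂₁h)²} + h a₂₁ f(t,x))` tends to `(t, x)`, uniform continuity of `f` on a
compact set makes `Φ_n(x) - f(t_n, x)` uniformly small, for `|e| ≤ M` and `x` in a bounded
tube around the exact solution; by the mean value theorem the defect
`u(t + h) - u(t) - h f(t, u(t))` is `o(h)`. Comparing one step of the scheme with one Euler
step of the exact solution, the Lipschitz bound in `x` then gives
`d_{n+1} ≤ (1 + hL) d_n + h η(h)` for the error `d_n`, with `η(h) → 0`. A discrete Gronwall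
argument yields `d_n ≤ (b - a) e^{L(b - a)} η(h)`, which in particular keeps `v_n` inside the
tube where the consistency estimate holds.
-/

open Real Set Filter Topology

/-- The increment `b₁ k₁ + b₂ k₂` of the two-stage RBF Runge–Kutta method at `(t, x)` with step
`h`; the shape parameter `e` stands for `ε²`. -/
noncomputable def rbfIncrement (f : ℝ → ℝ → ℝ) (b₁ b₂ c₂ a₂₁ e h t x : ℝ) : ℝ :=
  b₁ * f t x + b₂ * f (t + c₂ * h) (x * Real.exp (-e * (a₂₁ * h) ^ 2) + h * a₂₁ * f t x)

section Consistency

variable {f : ℝ → ℝ → ℝ} {b₁ b₂ : ℝ}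

theorem tendstoUniformlyOn_rbfIncrement (hf : Continuous fun p : ℝ × ℝ => f p.1 p.2)
    (hb : b₁ + b₂ = 1) (c₂ a₂₁ : ℝ) {K : Set (ℝ × ℝ × ℝ)} (hK : IsCompact K) :
    TendstoUniformlyOn (fun h (p : ℝ × ℝ × ℝ) => rbfIncrement f b₁ b₂ c₂ a₂₁ p.1 h p.2.1 p.2.2)
      (fun p => f p.2.1 p.2.2) (𝓝 0) K := by
  have hf' : Continuous (Function.uncurry f) := hf
  have hcont : Continuous
      ↿fun h (p : ℝ × ℝ × ℝ) => rbfIncrement f b₁ b₂ c₂ a₂₁ p.1 h p.2.1 p.2.2 := by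
    show Continuous fun q : ℝ × ℝ × ℝ × ℝ => rbfIncrement f b₁ b₂ c₂ a₂₁ q.2.1 q.1 q.2.2.1 q.2.2.2
    unfold rbfIncrement
    fun_prop
  have hU : Icc (-1 : ℝ) 1 ∈ 𝓝 0 := Icc_mem_nhds (by norm_num) (by norm_num)
  have := ((isCompact_Icc.prod hK).uniformContinuousOn_of_continuous
    hcont.continuousOn).tendstoUniformlyOn (mem_of_mem_nhds hU)
  rw [nhdsWithin_eq_nhds.2 hU] at this
  convert this using 2 with p
  simp [rbfIncrement, ← add_mul, hb]

theorem eventually_abs_rbfIncrement_sub_le (hf : Continuous fun p : ℝ × ℝ => f p.1 p.2)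
    (hb : b₁ + b₂ = 1) (c₂ a₂₁ M R a b : ℝ) {η : ℝ} (hη : 0 < η) :
    ∀ᶠ h in 𝓝 0, ∀ e t x, |e| ≤ M → t ∈ Icc a b → |x| ≤ R →
      |rbfIncrement f b₁ b₂ c₂ a₂₁ e h t x - f t x| ≤ η := by
  have hK : IsCompact (Icc (-M) M ×ˢ Icc a b ×ˢ Icc (-R) R) :=
    isCompact_Icc.prod (isCompact_Icc.prod isCompact_Icc)
  filter_upwards [Metric.tendstoUniformlyOn_iff.1
    (tendstoUniformlyOn_rbfIncrement hf hb c₂ a₂₁ hK) η hη] with h hh e t x he ht hx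
  have := hh (e, t, x) ⟨abs_le.1 he, ht, abs_le.1 hx⟩
  rw [Real.dist_eq, abs_sub_comm] at this
  exact this.le

end Consistency

theorem eventually_abs_sub_sub_mul_le {u g : ℝ → ℝ} {a b ε : ℝ}
    (hu : ∀ t ∈ Icc a b, HasDerivAt u (g t) t) (hg : ContinuousOn g (Icc a b)) (hε : 0 < ε) :
    ∀ᶠ h in 𝓝 0, ∀ t ∈ Icc a b, 0 ≤ h → t + h ≤ b → |u (t + h) - u t - h * g t| ≤ h * ε := by
  obtain ⟨δ, hδ, hgδ⟩ := Metric.uniformContinuousOn_iff.1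
    (isCompact_Icc.uniformContinuousOn_of_continuous hg) ε hε
  filter_upwards [Metric.ball_mem_nhds 0 hδ] with h hhδ t ht hh htb
  rw [Metric.mem_ball, Real.dist_eq, sub_zero, abs_of_nonneg hh] at hhδ
  have hsub : Icc t (t + h) ⊆ Icc a b := Icc_subset_Icc ht.1 htb
  -- mean value theorem for `s ↦ u s - s g(t)`, whose derivative `g s - g t` is at most `ε`
  have hmvt := norm_image_sub_le_of_norm_deriv_le_segment' (f := fun s => u s - s * g t)
    (C := ε) (fun s hs => ((hu s (hsub hs)).sub (hasDerivAt_mul_const (g t))).hasDerivWithinAt)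
    (fun s hs => by
      rw [Real.norm_eq_abs, ← Real.dist_eq]
      refine (hgδ s (hsub (Ico_subset_Icc_self hs)) t ht ?_).le
      rw [Real.dist_eq, abs_of_nonneg (sub_nonneg.2 hs.1)]
      linarith [hs.2])
    (t + h) ⟨by linarith, le_rfl⟩
  rw [Real.norm_eq_abs] at hmvt
  calc |u (t + h) - u t - h * g t| = |u (t + h) - (t + h) * g t - (u t - t * g t)| := by ring_nf
    _ ≤ ε * (t + h - t) := hmvt
    _ = h * ε := by ring

theorem discrete_gronwall_of_le_bound {d : ℕ → ℝ} {N : ℕ} {h L η r : ℝ} (hh : 0 ≤ h)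
    (hL : 0 ≤ L) (hη : 0 ≤ η) (hd0 : d 0 ≤ 0) (hr : N * h * exp (L * (N * h)) * η ≤ r)
    (hstep : ∀ n < N, d n ≤ r → d (n + 1) ≤ (1 + h * L) * d n + h * η) :
    ∀ n ≤ N, d n ≤ n * h * exp (L * (n * h)) * η := by
  intro n
  induction n with
  | zero => simpa using hd0
  | succ n ih =>
    intro hn
    have hnN : n < N := hn
    have hdn := ih hnN.le
    have hdr : d n ≤ r := hdn.trans (le_trans (by gcongr) hr)
    have hexp : exp (h * L) * exp (L * (n * h)) = exp (L * ((n + 1) * h)) := by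
      rw [← exp_add]; ring_nf
    calc d (n + 1) ≤ (1 + h * L) * d n + h * η := hstep n hnN hdr
      _ ≤ (1 + h * L) * (n * h * exp (L * (n * h)) * η) + h * η := by gcongr
      _ ≤ exp (h * L) * (n * h * exp (L * (n * h)) * η) + h * exp (L * ((n + 1) * h)) * η := by
        gcongr
        · exact add_comm (h * L) 1 ▸ add_one_le_exp (h * L)
        · exact le_mul_of_one_le_right hh (one_le_exp (by positivity))
      _ = ((n + 1 : ℕ) : ℝ) * h * exp (L * ((n + 1 : ℕ) * h)) * η := by
        push_cast
        linear_combination (n * h * η) * hexp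

theorem abs_step_error_le {x y x' y' Φ Fx Fy h L ρ σ : ℝ} (hh : 0 ≤ h) (hx' : x' = x + h * Φ)
    (hΦ : |Φ - Fx| ≤ ρ) (hF : |Fx - Fy| ≤ L * |x - y|) (hy' : |y' - y - h * Fy| ≤ h * σ) :
    |x' - y'| ≤ (1 + h * L) * |x - y| + h * (ρ + σ) :=
  calc |x' - y'| = |(x - y) + h * (Fx - Fy) + h * (Φ - Fx) - (y' - y - h * Fy)| := by
        rw [hx']; ring_nf
    _ ≤ |x - y| + h * |Fx - Fy| + h * |Φ - Fx| + |y' - y - h * Fy| := by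
        grw [abs_sub, abs_add_three, abs_mul, abs_mul, abs_of_nonneg hh]
    _ ≤ |x - y| + h * (L * |x - y|) + h * ρ + h * σ := by gcongr
    _ = (1 + h * L) * |x - y| + h * (ρ + σ) := by ring

theorem grid_mem_Icc {a b h : ℝ} {n N : ℕ} (hh : 0 ≤ h) (hNh : N * h = b - a) (hn : n ≤ N) :
    a + n * h ∈ Icc a b := by
  have : (n : ℝ) * h ≤ N * h := by gcongr
  constructor <;> nlinarith [mul_nonneg (Nat.cast_nonneg n) hh]

theorem abs_sub_le_of_consistent_one_step {f : ℝ → ℝ → ℝ} {u : ℝ → ℝ} {v : ℕ → ℝ}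
    {Φ : ℕ → ℝ → ℝ} {a b h L ρ σ r : ℝ} {N : ℕ} (hh : 0 ≤ h) (hNh : N * h = b - a)
    (hL : 0 ≤ L) (hρ : 0 ≤ ρ) (hσ : 0 ≤ σ) (hr : (b - a) * exp (L * (b - a)) * (ρ + σ) ≤ r)
    (hlip : ∀ t ∈ Icc a b, ∀ x y, |f t x - f t y| ≤ L * |x - y|)
    (hloc : ∀ t ∈ Icc a b, t + h ≤ b → |u (t + h) - u t - h * f t (u t)| ≤ h * σ)
    (hcons : ∀ n < N, ∀ x, |x - u (a + n * h)| ≤ r → |Φ n x - f (a + n * h) x| ≤ ρ)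
    (hv0 : v 0 = u a) (hrec : ∀ n < N, v (n + 1) = v n + h * Φ n (v n)) :
    ∀ n ≤ N, |v n - u (a + n * h)| ≤ (b - a) * exp (L * (b - a)) * (ρ + σ) := by
  have hmono : ∀ n ≤ N,
      (n : ℝ) * h * exp (L * (n * h)) * (ρ + σ) ≤ (b - a) * exp (L * (b - a)) * (ρ + σ) := by
    intro n hn
    rw [← hNh]
    gcongr
  intro n hn
  refine (discrete_gronwall_of_le_bound (d := fun n => |v n - u (a + n * h)|) hh hL
    (by positivity) (by simp [hv0]) ((hmono N le_rfl).trans hr) (fun m hm hdm => ?_) n hn).trans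
    (hmono n hn)
  have ht := grid_mem_Icc hh hNh hm.le
  have hnext : a + ((m + 1 : ℕ) : ℝ) * h = a + m * h + h := by push_cast; ring
  have htb : a + m * h + h ≤ b := hnext ▸ (grid_mem_Icc hh hNh hm).2
  simp only [hnext]
  exact abs_step_error_le hh (hrec m hm) (hcons m hm _ hdm) (hlip _ ht _ _) (hloc _ ht htb)

theorem stmt_0_general (a b L : ℝ) (hab : a < b)
    (f : ℝ → ℝ → ℝ)
    (hfc : Continuous (fun p : ℝ × ℝ => f p.1 p.2))
    (hlip : ∀ t ∈ Set.Icc a b, ∀ u₁ u₂ : ℝ, |f t u₁ - f t u₂| ≤ L * |u₁ - u₂|)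
    (u : ℝ → ℝ)
    (hu : ∀ t ∈ Set.Icc a b, HasDerivAt u (f t (u t)) t)
    (b₁ b₂ c₂ a₂₁ : ℝ)
    (hb : b₁ + b₂ = 1)
    (M : ℝ) :
    ∀ ε > 0, ∃ N₀ : ℕ, ∀ N : ℕ, N₀ ≤ N → 1 ≤ N →
      ∀ e : ℕ → ℝ, (∀ n < N, |e n| ≤ M) →
      ∀ v : ℕ → ℝ, v 0 = u a →
      (∀ n < N,
        v (n + 1) = v n + ((b - a) / N) *
          (b₁ * f (a + n * ((b - a) / N)) (v n) +
           b₂ * f (a + n * ((b - a) / N) + c₂ * ((b - a) / N))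
             (v n * Real.exp (-(e n) * (a₂₁ * ((b - a) / N)) ^ 2) +
              ((b - a) / N) * a₂₁ * f (a + n * ((b - a) / N)) (v n)))) →
      ∀ n ≤ N, |v n - u (a + n * ((b - a) / N))| < ε := by
  intro ε hε
  have hba : 0 < b - a := sub_pos.2 hab
  have hL : 0 ≤ L := by simpa using (abs_nonneg _).trans (hlip a ⟨le_rfl, hab.le⟩ 1 0)
  have hucont : ContinuousOn u (Icc a b) := fun t ht => (hu t ht).continuousAt.continuousWithinAt
  obtain ⟨U, hU⟩ := isCompact_Icc.exists_bound_of_continuousOn hucont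
  simp only [Real.norm_eq_abs] at hU
  set C := (b - a) * exp (L * (b - a))
  set η := min ε 1 / (4 * C)
  have hη : 0 < η := by positivity
  have hC : C * (η + η) = min ε 1 / 2 := by
    have : 0 < C := by positivity
    simp only [η]
    field_simp
    ring
  obtain ⟨N₀, hN₀⟩ := eventually_atTop.1 <|
    (tendsto_const_div_atTop_nhds_zero_nat (b - a)).eventually <|
      (eventually_abs_rbfIncrement_sub_le hfc hb c₂ a₂₁ M (U + 1) a b hη).and
        (eventually_abs_sub_sub_mul_le hu (hfc.comp_continuousOn (continuousOn_id.prodMk hucont)) hη)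
  refine ⟨N₀, fun N hN hN1 e he v hv0 hrec n hn => ?_⟩
  obtain ⟨hcons, hloc⟩ := hN₀ N hN
  have hh : 0 ≤ (b - a) / N := by positivity
  have hNh : N * ((b - a) / N) = b - a := mul_div_cancel₀ _ (by positivity)
  have hgrid := fun m hm => grid_mem_Icc (a := a) hh hNh (n := m) hm
  have herr := abs_sub_le_of_consistent_one_step (r := 1) hh hNh hL hη.le hη.le
    (by linarith [min_le_right ε 1]) hlip (fun t ht htb => hloc t ht hh htb)
    (fun m hm x hx => hcons _ _ _ (he m hm) (hgrid m hm.le)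
      (by linarith [abs_sub_abs_le_abs_sub x (u (a + m * ((b - a) / N))), hU _ (hgrid m hm.le)]))
    hv0 hrec n hn
  linarith [min_le_left ε 1]

/-- Convergence of the two-stage RBF Runge–Kutta method with bounded shape
parameters, uniformly over all admissible choices of the shape parameters. -/
theorem stmt_0 (a b L : ℝ) (hab : a < b)
    (f : ℝ → ℝ → ℝ)
    (hfc : Continuous (fun p : ℝ × ℝ => f p.1 p.2))
    (hlip : ∀ t ∈ Set.Icc a b, ∀ u₁ u₂ : ℝ, |f t u₁ - f t u₂| ≤ L * |u₁ - u₂|)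
    (u : ℝ → ℝ)
    (hu : ∀ t ∈ Set.Icc a b, HasDerivAt u (f t (u t)) t)
    (b₁ b₂ c₂ a₂₁ : ℝ)
    (hb : b₁ + b₂ = 1) (ha21 : a₂₁ = c₂) (hoc : b₂ * c₂ = 1 / 2)
    (M : ℝ) (hM : 0 ≤ M) :
    ∀ ε > 0, ∃ N₀ : ℕ, ∀ N : ℕ, N₀ ≤ N → 1 ≤ N →
      ∀ e : ℕ → ℝ, (∀ n < N, |e n| ≤ M) →
      ∀ v : ℕ → ℝ, v 0 = u a →
      (∀ n < N,
        v (n + 1) = v n + ((b - a) / N) *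
          (b₁ * f (a + n * ((b - a) / N)) (v n) +
           b₂ * f (a + n * ((b - a) / N) + c₂ * ((b - a) / N))
             (v n * Real.exp (-(e n) * (a₂₁ * ((b - a) / N)) ^ 2) +
              ((b - a) / N) * a₂₁ * f (a + n * ((b - a) / N)) (v n)))) →
      ∀ n ≤ N, |v n - u (a + n * ((b - a) / N))| < ε :=
  stmt_0_general a b L hab f hfc hlip u hu b₁ b₂ c₂ a₂₁ hb M
end

section
/- Let f : ℝ → ℝ → ℝ satisfy |f(t,u₁) − f(t,u₂)| ≤ L|u₁ − u₂| for all t, u₁, u₂, with L ≥ 0. Fix reals b₁, b₂, c₂ with c₂ ≥ 0, a step size h ≥ 0, a time t, a shape parameter e ∈ ℝ, and set E = exp(−e c₂² h²). For w ∈ ℝ define k₁(w) = f(t, w) and k₂(w) = f(t + c₂h, wE + h c₂ k₁(w)), and define Φ(w) = w + h(b₁k₁(w) + b₂k₂(w)). Then for all w₁, w₂ ∈ ℝ, |Φ(w₁) − Φ(w₂)| ≤ (1 + |b₁|hL + |b₂|hL(E + c₂hL)) |w₁ − w₂|. In particular, if u is any function with value u(t) at time t and τ = (u(t+h) − u(t))/h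 − (b₁k₁(u(t)) + b₂k₂(u(t))), then |u(t+h) − Φ(w)| ≤ (1 + |b₁|hL + |b₂|hL(E + c₂hL)) |u(t) − w| + h|τ| for every w ∈ ℝ. -/
/-! The second stage evaluates `f` at `w E + h c₂ k₁(w)`, so it is Lipschitz with constant
`L (E + c₂ h L)`, and `Φ` inherits the stated constant from the triangle inequality. For the error
estimate, split `u(t+h) - Φ w` through `Φ (u t)`: the first piece is exactly `h τ`. -/

theorem abs_comp_affine_sub_le {g k : ℝ → ℝ} {L K : ℝ} (hL : 0 ≤ L)
    (hg : ∀ x y, |g x - g y| ≤ L * |x - y|) (hk : ∀ x y, |k x - k y| ≤ K * |x - y|)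
    (E c x y : ℝ) :
    |g (x * E + c * k x) - g (y * E + c * k y)| ≤ L * (|E| + |c| * K) * |x - y| := by
  have inner : |(x * E + c * k x) - (y * E + c * k y)| ≤ (|E| + |c| * K) * |x - y| :=
    calc |(x * E + c * k x) - (y * E + c * k y)|
        = |(x - y) * E + c * (k x - k y)| := by ring_nf
      _ ≤ |x - y| * |E| + |c| * (K * |x - y|) := by
          grw [abs_add_le, abs_mul, abs_mul, hk]
      _ = (|E| + |c| * K) * |x - y| := by ring
  calc |g (x * E + c * k x) - g (y * E + c * k y)|
      ≤ L * |(x * E + c * k x) - (y * E + c * k y)| := hg _ _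
    _ ≤ L * ((|E| + |c| * K) * |x - y|) := by gcongr
    _ = L * (|E| + |c| * K) * |x - y| := by ring

theorem abs_two_stage_step_sub_le {k₁ k₂ : ℝ → ℝ} {K₁ K₂ : ℝ}
    (hk₁ : ∀ x y, |k₁ x - k₁ y| ≤ K₁ * |x - y|) (hk₂ : ∀ x y, |k₂ x - k₂ y| ≤ K₂ * |x - y|)
    (h b₁ b₂ x y : ℝ) :
    |(x + h * (b₁ * k₁ x + b₂ * k₂ x)) - (y + h * (b₁ * k₁ y + b₂ * k₂ y))|
      ≤ (1 + |b₁| * |h| * K₁ + |b₂| * |h| * K₂) * |x - y| :=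
  calc |(x + h * (b₁ * k₁ x + b₂ * k₂ x)) - (y + h * (b₁ * k₁ y + b₂ * k₂ y))|
      = |(x - y) + (h * b₁) * (k₁ x - k₁ y) + (h * b₂) * (k₂ x - k₂ y)| := by ring_nf
    _ ≤ |x - y| + |h * b₁| * (K₁ * |x - y|) + |h * b₂| * (K₂ * |x - y|) := by
        grw [abs_add_le, abs_add_le, abs_mul (h * b₁), abs_mul (h * b₂), hk₁, hk₂]
    _ = (1 + |b₁| * |h| * K₁ + |b₂| * |h| * K₂) * |x - y| := by
        rw [abs_mul, abs_mul]; ring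

-- For `h = 0` both sides vanish, so the identity survives Lean's `x / 0 = 0`.
theorem sub_step_eq_mul_truncation (u : ℝ → ℝ) (t h c : ℝ) :
    u (t + h) - (u t + h * c) = h * ((u (t + h) - u t) / h - c) := by
  rcases eq_or_ne h 0 with rfl | hh
  · simp
  · field_simp
    ring

/-- Lipschitz bound for the one-step map of the two-stage RBF Runge–Kutta method,
and the resulting one-step error estimate in terms of the local truncation error. -/
theorem stmt_2 (f : ℝ → ℝ → ℝ) (L : ℝ) (hL : 0 ≤ L)
    (hf : ∀ t u₁ u₂ : ℝ, |f t u₁ - f t u₂| ≤ L * |u₁ - u₂|)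
    (b₁ b₂ c₂ h t e E : ℝ) (hc₂ : 0 ≤ c₂) (hh : 0 ≤ h)
    (hE : E = Real.exp (-e * c₂ ^ 2 * h ^ 2))
    (k₁ k₂ Φ : ℝ → ℝ)
    (hk₁ : ∀ w, k₁ w = f t w)
    (hk₂ : ∀ w, k₂ w = f (t + c₂ * h) (w * E + h * c₂ * k₁ w))
    (hΦ : ∀ w, Φ w = w + h * (b₁ * k₁ w + b₂ * k₂ w)) :
    (∀ w₁ w₂ : ℝ,
        |Φ w₁ - Φ w₂| ≤ (1 + |b₁| * h * L + |b₂| * h * L * (E + c₂ * h * L)) * |w₁ - w₂|)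
    ∧ ∀ (u : ℝ → ℝ) (w : ℝ),
        |u (t + h) - Φ w|
          ≤ (1 + |b₁| * h * L + |b₂| * h * L * (E + c₂ * h * L)) * |u t - w|
            + h * |(u (t + h) - u t) / h - (b₁ * k₁ (u t) + b₂ * k₂ (u t))| := by
  have lip₁ : ∀ x y, |k₁ x - k₁ y| ≤ L * |x - y| := fun x y => by
    simpa only [hk₁] using hf t x y
  have lip₂ : ∀ x y, |k₂ x - k₂ y| ≤ L * (E + c₂ * h * L) * |x - y| := fun x y => by
    have hcoef : |E| + |h * c₂| * L = E + c₂ * h * L := by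
      rw [abs_of_pos (hE ▸ Real.exp_pos _), abs_of_nonneg (mul_nonneg hh hc₂), mul_comm h]
    simpa only [hk₂, hcoef] using abs_comp_affine_sub_le hL (hf (t + c₂ * h)) lip₁ E (h * c₂) x y
  have lipΦ : ∀ w₁ w₂ : ℝ,
      |Φ w₁ - Φ w₂| ≤ (1 + |b₁| * h * L + |b₂| * h * L * (E + c₂ * h * L)) * |w₁ - w₂| :=
    fun w₁ w₂ => by
      simpa only [hΦ, abs_of_nonneg hh, mul_assoc] using
        abs_two_stage_step_sub_le lip₁ lip₂ h b₁ b₂ w₁ w₂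
  refine ⟨lipΦ, fun u w => ?_⟩
  have consistency : |u (t + h) - Φ (u t)|
      = h * |(u (t + h) - u t) / h - (b₁ * k₁ (u t) + b₂ * k₂ (u t))| := by
    rw [hΦ, sub_step_eq_mul_truncation, abs_mul, abs_of_nonneg hh]
  calc |u (t + h) - Φ w| ≤ |u (t + h) - Φ (u t)| + |Φ (u t) - Φ w| := abs_sub_le _ _ _
    _ ≤ _ := by grw [consistency, lipΦ]; linarith
end

section
/- Let f : ℝ → ℝ → ℝ satisfy |f(t,u₁) − f(t,u₂)| ≤ L|u₁ − u₂| for all t, u₁, u₂, with L ≥ 0. Let t ∈ ℝ, h ≥ 0, reals c₂ ≥ 0, c₃, a₃₁, a₃₂ and shape parameters e₂, e₃ ∈ ℝ; set E₂ = exp(−e₂ c₂² h²) and E₃ = exp(−e₃ c₃² h²). For w ∈ ℝ define k₁(w) = f(t,w), k₂(w) = f(t + c₂h, wE₂ + h c₂ k₁(w)), k₃(w) = f(t + c₃h, wE₃ + h(a₃₁k₁(w) + a₃₂k₂(w))). Then for all w₁, w₂ ∈ ℝ, |k₃(w₁) − k₃(w₂)| ≤ L(E₃ + (|a₃₁| +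 |a₃₂|E₂)hL + |a₃₂|c₂h²L²)|w₁ − w₂|. -/
/-! Each stage is `f` evaluated at an affine combination of the start value and earlier stages, so
Lipschitz bounds propagate through the stages by the rules for scalar multiples, sums and
composition; the exponential factors `E₂, E₃` are positive, so they enter the bound unchanged. -/

def HasLipschitzBound (M : ℝ) (g : ℝ → ℝ) : Prop :=
  ∀ w₁ w₂, |g w₁ - g w₂| ≤ M * |w₁ - w₂|

namespace HasLipschitzBound

variable {M M₁ M₂ : ℝ} {f g g₁ g₂ : ℝ → ℝ}

theorem nonneg (hg : HasLipschitzBound M g) : 0 ≤ M := by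
  simpa using (abs_nonneg _).trans (hg 1 0)

theorem mul_const (E : ℝ) : HasLipschitzBound |E| (fun w => w * E) := fun w₁ w₂ => by
  rw [← sub_mul, abs_mul, mul_comm]

theorem const_mul (hg : HasLipschitzBound M g) (c : ℝ) :
    HasLipschitzBound (|c| * M) (fun w => c * g w) := fun w₁ w₂ => by
  rw [← mul_sub, abs_mul, mul_assoc]
  exact mul_le_mul_of_nonneg_left (hg w₁ w₂) (abs_nonneg c)

theorem add (hg₁ : HasLipschitzBound M₁ g₁) (hg₂ : HasLipschitzBound M₂ g₂) :
    HasLipschitzBound (M₁ + M₂) (fun w => g₁ w + g₂ w) := fun w₁ w₂ =>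
  calc |g₁ w₁ + g₂ w₁ - (g₁ w₂ + g₂ w₂)| = |(g₁ w₁ - g₁ w₂) + (g₂ w₁ - g₂ w₂)| := by ring_nf
    _ ≤ |g₁ w₁ - g₁ w₂| + |g₂ w₁ - g₂ w₂| := abs_add_le _ _
    _ ≤ (M₁ + M₂) * |w₁ - w₂| := by linarith [hg₁ w₁ w₂, hg₂ w₁ w₂]

theorem comp (hf : HasLipschitzBound M₁ f) (hg : HasLipschitzBound M₂ g) :
    HasLipschitzBound (M₁ * M₂) (fun w => f (g w)) := fun w₁ w₂ =>
  calc |f (g w₁) - f (g w₂)| ≤ M₁ * |g w₁ - g w₂| := hf _ _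
    _ ≤ M₁ * (M₂ * |w₁ - w₂|) := mul_le_mul_of_nonneg_left (hg w₁ w₂) hf.nonneg
    _ = M₁ * M₂ * |w₁ - w₂| := by ring

theorem of_eq (hg : HasLipschitzBound M₁ g) (hM : M₁ = M₂) (hfg : ∀ w, f w = g w) :
    HasLipschitzBound M₂ f := by
  rwa [← hM, show f = g from funext hfg]

end HasLipschitzBound

open HasLipschitzBound in
theorem stmt_5_general (f : ℝ → ℝ → ℝ) (L : ℝ)
    (hf : ∀ t u₁ u₂ : ℝ, |f t u₁ - f t u₂| ≤ L * |u₁ - u₂|)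
    (t h c₂ c₃ a₃₁ a₃₂ e₂ e₃ E₂ E₃ : ℝ) (hh : 0 ≤ h) (hc₂ : 0 ≤ c₂)
    (hE₂ : E₂ = Real.exp (-e₂ * c₂ ^ 2 * h ^ 2))
    (hE₃ : E₃ = Real.exp (-e₃ * c₃ ^ 2 * h ^ 2))
    (k₁ k₂ k₃ : ℝ → ℝ)
    (hk₁ : ∀ w, k₁ w = f t w)
    (hk₂ : ∀ w, k₂ w = f (t + c₂ * h) (w * E₂ + h * c₂ * k₁ w))
    (hk₃ : ∀ w, k₃ w = f (t + c₃ * h) (w * E₃ + h * (a₃₁ * k₁ w + a₃₂ * k₂ w))) :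
    ∀ w₁ w₂ : ℝ,
      |k₃ w₁ - k₃ w₂|
        ≤ L * (E₃ + (|a₃₁| + |a₃₂| * E₂) * h * L + |a₃₂| * c₂ * h ^ 2 * L ^ 2) * |w₁ - w₂| := by
  have hE₂_abs : |E₂| = E₂ := abs_of_pos (hE₂ ▸ Real.exp_pos _)
  have hE₃_abs : |E₃| = E₃ := abs_of_pos (hE₃ ▸ Real.exp_pos _)
  have hf_bound : ∀ s, HasLipschitzBound L (f s) := hf
  have hk₁_bound : HasLipschitzBound L k₁ := (hf_bound t).of_eq rfl hk₁
  have hk₂_bound : HasLipschitzBound (L * (E₂ + h * c₂ * L)) k₂ :=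
    ((hf_bound _).comp ((mul_const E₂).add (hk₁_bound.const_mul (h * c₂)))).of_eq
      (by rw [hE₂_abs, abs_of_nonneg (mul_nonneg hh hc₂)]) hk₂
  exact ((hf_bound _).comp ((mul_const E₃).add
    (((hk₁_bound.const_mul a₃₁).add (hk₂_bound.const_mul a₃₂)).const_mul h))).of_eq
    (by rw [hE₃_abs, abs_of_nonneg hh]; ring) hk₃

/-- Lipschitz estimate for the third stage of the three-stage RBF Runge–Kutta method. -/
theorem stmt_5 (f : ℝ → ℝ → ℝ) (L : ℝ) (hL : 0 ≤ L)
    (hf : ∀ t u₁ u₂ : ℝ, |f t u₁ - f t u₂| ≤ L * |u₁ - u₂|)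
    (t h c₂ c₃ a₃₁ a₃₂ e₂ e₃ E₂ E₃ : ℝ) (hh : 0 ≤ h) (hc₂ : 0 ≤ c₂)
    (hE₂ : E₂ = Real.exp (-e₂ * c₂ ^ 2 * h ^ 2))
    (hE₃ : E₃ = Real.exp (-e₃ * c₃ ^ 2 * h ^ 2))
    (k₁ k₂ k₃ : ℝ → ℝ)
    (hk₁ : ∀ w, k₁ w = f t w)
    (hk₂ : ∀ w, k₂ w = f (t + c₂ * h) (w * E₂ + h * c₂ * k₁ w))
    (hk₃ : ∀ w, k₃ w = f (t + c₃ * h) (w * E₃ + h * (a₃₁ * k₁ w + a₃₂ * k₂ w))) :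
    ∀ w₁ w₂ : ℝ,
      |k₃ w₁ - k₃ w₂|
        ≤ L * (E₃ + (|a₃₁| + |a₃₂| * E₂) * h * L + |a₃₂| * c₂ * h ^ 2 * L ^ 2) * |w₁ - w₂| :=
  stmt_5_general f L hf t h c₂ c₃ a₃₁ a₃₂ e₂ e₃ E₂ E₃ hh hc₂ hE₂ hE₃ k₁ k₂ k₃ hk₁ hk₂ hk₃
end

section
/- Let f : ℝ → ℝ → ℝ satisfy |f(t,u₁) − f(t,u₂)| ≤ L|u₁ − u₂| for all t, u₁, u₂, with L ≥ 0. With the notation of the three-stage RBF Runge–Kutta stages (h ≥ 0, c₂ ≥ 0, c₃, a₃₁, a₃₂, e₂, e₃ ∈ ℝ, E₂ = exp(−e₂c₂²h²), E₃ = exp(−e₃c₃²h²), k₁(w) = f(t,w), k₂(w) = f(t + c₂h, wE₂ + hc₂k₁(w)), k₃(w) = f(t + c₃h, wE₃ + h(a₃₁k₁(w) + a₃₂k₂(w)))), define the one-step map Φ(w) = w + h(b₁k₁(w) + b₂k₂(w) + b₃k₃(w)). Then for all w₁, w₂ ∈ ℝ, |Φ(w₁) − Φ(w₂)| ≤ φ·|w₁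 − w₂|, where φ = 1 + (|b₁| + |b₂|E₂ + |b₃|E₃)hL + (|b₂|c₂ + |b₃||a₃₁| + |b₃||a₃₂|E₂)h²L² + |b₃||a₃₂|c₂h³L³. -/
/-!
Each stage is `f` at a fixed time, which is `L`-Lipschitz in the state, composed with
`w ↦ w * E + h * κ w`, where `κ` is a combination of earlier stages. Lipschitz constants add
under sums, scale by `‖a‖` under multiplication by `a` and multiply under composition, so a
constant for `k₁`, `k₂`, `k₃` and finally `Φ` (the same shape, with the identity in place of `f`
and `E = 1`) is obtained stage by stage; expanded, it is `φ`.
-/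

open scoped NNReal

lemma lipschitzWith_mul_const (a : ℝ) : LipschitzWith ‖a‖₊ fun w : ℝ => w * a := by
  simpa only [smul_eq_mul, mul_comm a] using lipschitzWith_smul (β := ℝ) a

lemma LipschitzWith.const_mul {α : Type*} [PseudoEMetricSpace α] {K : ℝ≥0} {g : α → ℝ}
    (hg : LipschitzWith K g) (a : ℝ) : LipschitzWith (‖a‖₊ * K) fun x => a * g x :=
  (lipschitzWith_smul a).comp hg

lemma LipschitzWith.comp_mul_const_add_const_mul {g κ : ℝ → ℝ} {L K : ℝ≥0}
    (hg : LipschitzWith L g) (hκ : LipschitzWith K κ) (E h : ℝ) :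
    LipschitzWith (L * (‖E‖₊ + ‖h‖₊ * K)) fun w => g (w * E + h * κ w) :=
  hg.comp ((lipschitzWith_mul_const E).add (hκ.const_mul h))

/-- Lipschitz bound (amplification factor) for the one-step map of the
three-stage RBF Runge–Kutta method. -/
theorem stmt_6 (f : ℝ → ℝ → ℝ) (L : ℝ) (hL : 0 ≤ L)
    (hf : ∀ t u₁ u₂ : ℝ, |f t u₁ - f t u₂| ≤ L * |u₁ - u₂|)
    (t h c₂ c₃ a₃₁ a₃₂ b₁ b₂ b₃ e₂ e₃ E₂ E₃ : ℝ) (hh : 0 ≤ h) (hc₂ : 0 ≤ c₂)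
    (hE₂ : E₂ = Real.exp (-e₂ * c₂ ^ 2 * h ^ 2))
    (hE₃ : E₃ = Real.exp (-e₃ * c₃ ^ 2 * h ^ 2))
    (k₁ k₂ k₃ Φ : ℝ → ℝ)
    (hk₁ : ∀ w, k₁ w = f t w)
    (hk₂ : ∀ w, k₂ w = f (t + c₂ * h) (w * E₂ + h * c₂ * k₁ w))
    (hk₃ : ∀ w, k₃ w = f (t + c₃ * h) (w * E₃ + h * (a₃₁ * k₁ w + a₃₂ * k₂ w)))
    (hΦ : ∀ w, Φ w = w + h * (b₁ * k₁ w + b₂ * k₂ w + b₃ * k₃ w)) :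
    ∀ w₁ w₂ : ℝ,
      |Φ w₁ - Φ w₂|
        ≤ (1 + (|b₁| + |b₂| * E₂ + |b₃| * E₃) * h * L
            + (|b₂| * c₂ + |b₃| * |a₃₁| + |b₃| * |a₃₂| * E₂) * h ^ 2 * L ^ 2
            + |b₃| * |a₃₂| * c₂ * h ^ 3 * L ^ 3) * |w₁ - w₂| := by
  intro w₁ w₂
  have hE₂pos : 0 < E₂ := hE₂ ▸ Real.exp_pos _
  have hE₃pos : 0 < E₃ := hE₃ ▸ Real.exp_pos _
  lift L to ℝ≥0 using hL
  have hf' (s : ℝ) : LipschitzWith L (f s) :=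
    LipschitzWith.of_dist_le_mul fun u₁ u₂ => by simpa only [Real.dist_eq] using hf s u₁ u₂
  have lip₁ : LipschitzWith L k₁ := funext hk₁ ▸ hf' t
  have lip₂ : LipschitzWith (L * (‖E₂‖₊ + ‖h‖₊ * (‖c₂‖₊ * L))) k₂ := by
    convert (hf' (t + c₂ * h)).comp_mul_const_add_const_mul (lip₁.const_mul c₂) E₂ h using 1
    ext w; rw [hk₂, mul_assoc]
  have lip₃ := (hf' (t + c₃ * h)).comp_mul_const_add_const_mul
    ((lip₁.const_mul a₃₁).add (lip₂.const_mul a₃₂)) E₃ h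
  rw [← funext hk₃] at lip₃
  have lipΦ := LipschitzWith.id.comp_mul_const_add_const_mul
    (((lip₁.const_mul b₁).add (lip₂.const_mul b₂)).add (lip₃.const_mul b₃)) 1 h
  have hΦ' : Φ = fun w => id (w * 1 + h * (b₁ * k₁ w + b₂ * k₂ w + b₃ * k₃ w)) := by
    ext w; rw [hΦ, mul_one, id]
  rw [← hΦ'] at lipΦ
  have hΦdist := lipΦ.dist_le_mul w₁ w₂
  rw [Real.dist_eq, Real.dist_eq] at hΦdist
  convert hΦdist using 2
  simp only [NNReal.coe_mul, NNReal.coe_add, NNReal.coe_one, coe_nnnorm, Real.norm_eq_abs,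
    abs_of_nonneg hh, abs_of_nonneg hc₂, abs_of_pos hE₂pos, abs_of_pos hE₃pos, abs_one]
  ring
end

section
/- Let a < b, let f : ℝ → ℝ → ℝ be continuous and satisfy |f(t,u₁) − f(t,u₂)| ≤ L|u₁ − u₂| for all t ∈ [a,b] and u₁,u₂ ∈ ℝ, and let u : [a,b] → ℝ be continuously differentiable with u'(t) = f(t,u(t)) on [a,b]. Fix reals b₁, b₂, b₃, c₂, c₃, a₂₁, a₃₁, a₃₂ with b₁ + b₂ + b₃ = 1, a₂₁ = c₂, a₃₁ + a₃₂ = c₃, b₂c₂ + b₃c₃ = 1/2, b₂c₂² + b₃c₃² = 1/3 and a₃₂b₃c₂ = 1/6, and fix M ≥ 0. For each N ≥ 1 set h = (b−a)/N, t_n = a + nh, choose shape parameters e_{n,2}, e_{n,3} ∈ ℝ with |e_{n,2}| ≤ M and |e_{n,3}| ≤ M for 0 ≤ n ≤ N−1, and define v₀ = u(a) and v_{n+1} = v_n + h(b₁k₁ + b₂k₂ + b₃k₃), where k₁ = f(t_n, v_n), k₂ = f(t_n + c₂h, v_n·exp(−e_{n,2}(c₂h)²) + h a₂₁ k₁) and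 k₃ = f(t_n + c₃h, v_n·exp(−e_{n,3}(c₃h)²) + h(a₃₁k₁ + a₃₂k₂)). Then max_{0 ≤ n ≤ N} |v_n − u(t_n)| → 0 as N → ∞ (uniformly over all admissible choices of the shape parameters). -/
/-!
The RBF increment is a continuous function of `(h, t, y, e₂, e₃)` which at `h = 0` equals
`(b₁ + b₂ + b₃) f(t, y) = f(t, y)`. By compactness it is therefore uniformly `η`-close to
`f(t, y)` for all small `h`, all `t ∈ [a, b]`, all `y` within distance `1` of the solution and all
`|e₂|, |e₃| ≤ M`. Combined with the Lipschitz bound on `f(t, ·)` and the `o(h)` local truncation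
error of the exact solution, the global errors satisfy `d_{n+1} ≤ (1 + hL) d_n + 4ηh`, and the
discrete Grönwall inequality gives `d_n ≤ (b - a) e^{L (b - a)} 4η`. Choosing `η` so that this is
below `min ε 1` keeps the iterates within distance `1` of the solution, where the closeness holds.
-/

open Set Filter Topology Real

theorem IsCompact.eventually_forall_dist_lt {α β E : Type*} [TopologicalSpace α]
    [TopologicalSpace β] [PseudoMetricSpace E] {F : α → β → E} {k : Set β} (hk : IsCompact k)
    (hF : Continuous (Function.uncurry F)) (q : α) {η : ℝ} (hη : 0 < η) :
    ∀ᶠ p in 𝓝 q, ∀ x ∈ k, dist (F p x) (F q x) < η := by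
  obtain ⟨V, hV, hVF⟩ := hk.mem_uniformity_of_prod hF.continuousOn (mem_univ q)
    (Metric.dist_mem_uniformity hη)
  rw [nhdsWithin_univ] at hV
  exact eventually_of_mem hV hVF

structure RKTableau3 where
  (b₁ b₂ b₃ c₂ c₃ a₂₁ a₃₁ a₃₂ : ℝ)

namespace RKTableau3

variable (τ : RKTableau3) (f : ℝ → ℝ → ℝ)

noncomputable def rbfIncrement (h t y e₂ e₃ : ℝ) : ℝ :=
  let k₁ := f t y
  let k₂ := f (t + τ.c₂ * h) (y * exp (-e₂ * (τ.c₂ * h) ^ 2) + h * τ.a₂₁ * k₁)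
  let k₃ := f (t + τ.c₃ * h) (y * exp (-e₃ * (τ.c₃ * h) ^ 2) + h * (τ.a₃₁ * k₁ + τ.a₃₂ * k₂))
  τ.b₁ * k₁ + τ.b₂ * k₂ + τ.b₃ * k₃

theorem rbfIncrement_zero (t y e₂ e₃ : ℝ) :
    τ.rbfIncrement f 0 t y e₂ e₃ = (τ.b₁ + τ.b₂ + τ.b₃) * f t y := by
  simp only [rbfIncrement, mul_zero, add_zero, zero_mul, zero_pow two_ne_zero, exp_zero, mul_one]
  ring

theorem continuous_rbfIncrement (hf : Continuous fun p : ℝ × ℝ => f p.1 p.2) :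
    Continuous fun p : ℝ × ℝ × ℝ × ℝ × ℝ =>
      τ.rbfIncrement f p.1 p.2.1 p.2.2.1 p.2.2.2.1 p.2.2.2.2 := by
  have hf₂ {g k : ℝ × ℝ × ℝ × ℝ × ℝ → ℝ} (hg : Continuous g) (hk : Continuous k) :
      Continuous fun p => f (g p) (k p) :=
    hf.comp (hg.prodMk hk)
  unfold rbfIncrement
  fun_prop (disch := assumption)

theorem eventually_abs_rbfIncrement_sub_lt (hf : Continuous fun p : ℝ × ℝ => f p.1 p.2)
    (hτ : τ.b₁ + τ.b₂ + τ.b₃ = 1) {S : Set (ℝ × ℝ × ℝ × ℝ)} (hS : IsCompact S) {η : ℝ}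
    (hη : 0 < η) :
    ∀ᶠ h in 𝓝 0, ∀ t y e₂ e₃, (t, y, e₂, e₃) ∈ S → |τ.rbfIncrement f h t y e₂ e₃ - f t y| < η := by
  filter_upwards [hS.eventually_forall_dist_lt (τ.continuous_rbfIncrement f hf) 0 hη
    (F := fun h (x : ℝ × ℝ × ℝ × ℝ) => τ.rbfIncrement f h x.1 x.2.1 x.2.2.1 x.2.2.2)]
    with h hh t y e₂ e₃ hx
  simpa [Real.dist_eq, rbfIncrement_zero, hτ] using hh _ hx

end RKTableau3

theorem eventually_abs_sub_sub_mul_le_of_hasDerivAt {u g : ℝ → ℝ} {a b η : ℝ}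
    (hg : ContinuousOn g (Icc a b)) (hu : ∀ t ∈ Icc a b, HasDerivAt u (g t) t) (hη : 0 < η) :
    ∀ᶠ h in 𝓝 0, ∀ t ∈ Icc a b, 0 ≤ h → t + h ≤ b → |u (t + h) - u t - h * g t| ≤ η * h := by
  obtain ⟨δ, hδ, hgδ⟩ :=
    Metric.uniformContinuousOn_iff_le.1 (isCompact_Icc.uniformContinuousOn_of_continuous hg) η hη
  filter_upwards [Metric.ball_mem_nhds 0 hδ] with h hhδ t ht hh htb
  rw [mem_ball_zero_iff, Real.norm_eq_abs, abs_of_nonneg hh] at hhδ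
  have hsub : Icc t (t + h) ⊆ Icc a b := Icc_subset_Icc ht.1 htb
  have hmvt := norm_image_sub_le_of_norm_deriv_le_segment' (f := fun s => u s - s * g t) (C := η)
    (fun s hs => ((hu s (hsub hs)).sub ((hasDerivAt_id s).mul_const (g t))).hasDerivWithinAt)
    (fun s hs => ?_) (t + h) ⟨by linarith, le_rfl⟩
  · rw [Real.norm_eq_abs] at hmvt
    convert hmvt using 2 <;> ring
  · rw [one_mul, Real.norm_eq_abs, ← Real.dist_eq]
    refine hgδ s (hsub (Ico_subset_Icc_self hs)) t ht ?_
    rw [Real.dist_eq, abs_of_nonneg (by linarith [hs.1])]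
    linarith [hs.2]

theorem abs_step_error_le_s7 {y w w' h Φy Φw fy fw L η : ℝ} (hh : 0 ≤ h)
    (hΦy : |Φy - fy| ≤ η) (hΦw : |Φw - fw| ≤ η) (hf : |fy - fw| ≤ L * |y - w|)
    (htrunc : |w' - w - h * fw| ≤ η * h) :
    |y + h * Φy - w'| ≤ (1 + h * L) * |y - w| + h * (4 * η) := by
  obtain ⟨hΦy₁, hΦy₂⟩ := abs_le.1 hΦy
  obtain ⟨hΦw₁, hΦw₂⟩ := abs_le.1 hΦw
  obtain ⟨hf₁, hf₂⟩ := abs_le.1 hf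
  obtain ⟨ht₁, ht₂⟩ := abs_le.1 htrunc
  rw [abs_le]
  constructor <;> nlinarith [neg_abs_le (y - w), le_abs_self (y - w)]

theorem discrete_gronwall_local {d : ℕ → ℝ} {N : ℕ} {h Λ δ T : ℝ} (hh : 0 ≤ h) (hΛ : 0 ≤ Λ)
    (hδ : 0 ≤ δ) (hNT : N * h ≤ T) (hd0 : d 0 = 0)
    (hstep : ∀ n < N, d n ≤ T * exp (Λ * T) * δ → d (n + 1) ≤ (1 + h * Λ) * d n + h * δ) :
    ∀ n ≤ N, d n ≤ T * exp (Λ * T) * δ := by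
  have hmono : ∀ n ≤ N, n * h * exp (Λ * (n * h)) * δ ≤ T * exp (Λ * T) * δ := by
    intro n hn
    have hnh : 0 ≤ n * h := by positivity
    have hnT : n * h ≤ T := le_trans (by gcongr) hNT
    have hT : 0 ≤ T := hnh.trans hnT
    gcongr
  suffices key : ∀ n ≤ N, d n ≤ n * h * exp (Λ * (n * h)) * δ from
    fun n hn => (key n hn).trans (hmono n hn)
  intro n hn
  induction n with
  | zero => simp [hd0]
  | succ n ih =>
    have ihn := ih (by omega)
    have hexp : exp (Λ * ((n + 1) * h)) = exp (h * Λ) * exp (Λ * (n * h)) := by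
      rw [← exp_add]; ring_nf
    calc d (n + 1) ≤ (1 + h * Λ) * d n + h * δ := hstep n hn (ihn.trans (hmono n (by omega)))
      _ ≤ (1 + h * Λ) * (n * h * exp (Λ * (n * h)) * δ) + h * δ := by gcongr
      _ ≤ exp (h * Λ) * (n * h * exp (Λ * (n * h)) * δ) + h * exp (Λ * ((n + 1) * h)) * δ := by
        gcongr
        · linarith [add_one_le_exp (h * Λ)]
        · exact le_mul_of_one_le_right hh (one_le_exp (by positivity))
      _ = _ := by push_cast; rw [hexp]; ring

theorem abs_sub_le_of_consistent_one_step_s7 {f : ℝ → ℝ → ℝ} {u : ℝ → ℝ} {t v : ℕ → ℝ}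
    {Φ : ℕ → ℝ → ℝ} {N : ℕ} {h L η T ρ : ℝ} (hh : 0 ≤ h) (hL : 0 ≤ L) (hη : 0 ≤ η)
    (hNT : N * h ≤ T) (hρ : T * exp (L * T) * (4 * η) ≤ ρ)
    (hlip : ∀ n < N, ∀ y₁ y₂, |f (t n) y₁ - f (t n) y₂| ≤ L * |y₁ - y₂|)
    (htrunc : ∀ n < N, |u (t (n + 1)) - u (t n) - h * f (t n) (u (t n))| ≤ η * h)
    (hΦ : ∀ n < N, ∀ y, |y - u (t n)| ≤ ρ → |Φ n y - f (t n) y| ≤ η)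
    (hv0 : v 0 = u (t 0)) (hv : ∀ n < N, v (n + 1) = v n + h * Φ n (v n)) :
    ∀ n ≤ N, |v n - u (t n)| ≤ T * exp (L * T) * (4 * η) := by
  refine discrete_gronwall_local hh hL (by positivity) hNT (by simp [hv0]) fun n hn hd => ?_
  have hρ₀ : |u (t n) - u (t n)| ≤ ρ := by
    rw [sub_self, abs_zero]; exact ((abs_nonneg _).trans hd).trans hρ
  rw [hv n hn]
  exact abs_step_error_le_s7 hh (hΦ n hn _ (hd.trans hρ)) (hΦ n hn _ hρ₀) (hlip n hn _ _) (htrunc n hn)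

theorem stmt_7_general (a b L : ℝ) (hab : a < b)
    (f : ℝ → ℝ → ℝ)
    (hfc : Continuous (fun p : ℝ × ℝ => f p.1 p.2))
    (hlip : ∀ t ∈ Set.Icc a b, ∀ u₁ u₂ : ℝ, |f t u₁ - f t u₂| ≤ L * |u₁ - u₂|)
    (u : ℝ → ℝ)
    (hu : ∀ t ∈ Set.Icc a b, HasDerivAt u (f t (u t)) t)
    (b₁ b₂ b₃ c₂ c₃ a₂₁ a₃₁ a₃₂ : ℝ)
    (hb : b₁ + b₂ + b₃ = 1)
    (M : ℝ) :
    ∀ ε > 0, ∃ N₀ : ℕ, ∀ N : ℕ, N₀ ≤ N → 1 ≤ N →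
      ∀ e₂ e₃ : ℕ → ℝ, (∀ n < N, |e₂ n| ≤ M) → (∀ n < N, |e₃ n| ≤ M) →
      ∀ v : ℕ → ℝ, v 0 = u a →
      (∀ n < N,
        v (n + 1) = v n + ((b - a) / N) *
          (b₁ * f (a + n * ((b - a) / N)) (v n) +
           b₂ * f (a + n * ((b - a) / N) + c₂ * ((b - a) / N))
             (v n * Real.exp (-(e₂ n) * (c₂ * ((b - a) / N)) ^ 2) +
              ((b - a) / N) * a₂₁ * f (a + n * ((b - a) / N)) (v n)) +
           b₃ * f (a + n * ((b - a) / N) + c₃ * ((b - a) / N))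
             (v n * Real.exp (-(e₃ n) * (c₃ * ((b - a) / N)) ^ 2) +
              ((b - a) / N) *
                (a₃₁ * f (a + n * ((b - a) / N)) (v n) +
                 a₃₂ * f (a + n * ((b - a) / N) + c₂ * ((b - a) / N))
                   (v n * Real.exp (-(e₂ n) * (c₂ * ((b - a) / N)) ^ 2) +
                    ((b - a) / N) * a₂₁ * f (a + n * ((b - a) / N)) (v n)))))) →
      ∀ n ≤ N, |v n - u (a + n * ((b - a) / N))| < ε := by
  intro ε hε
  have hL : 0 ≤ L := by simpa using (abs_nonneg _).trans (hlip a ⟨le_rfl, hab.le⟩ 0 1)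
  have hucont : ContinuousOn u (Icc a b) := fun t ht => (hu t ht).continuousAt.continuousWithinAt
  obtain ⟨U, hU⟩ := isCompact_Icc.exists_bound_of_continuousOn hucont
  obtain ⟨η, hη, hηε⟩ := exists_pos_mul_lt (lt_min hε one_pos) ((b - a) * exp (L * (b - a)) * 4)
  let τ : RKTableau3 := ⟨b₁, b₂, b₃, c₂, c₃, a₂₁, a₃₁, a₃₂⟩
  have hΦ := τ.eventually_abs_rbfIncrement_sub_lt f hfc hb
    ((isCompact_Icc (a := a) (b := b)).prod ((isCompact_Icc (a := -(U + 1)) (b := U + 1)).prod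
      ((isCompact_Icc (a := -M) (b := M)).prod (isCompact_Icc (a := -M) (b := M))))) hη
  have htrunc := eventually_abs_sub_sub_mul_le_of_hasDerivAt (g := fun s => f s (u s))
    (hfc.comp_continuousOn (continuousOn_id.prodMk hucont)) hu hη
  obtain ⟨N₀, hN₀⟩ := eventually_atTop.1
    ((tendsto_const_div_atTop_nhds_zero_nat (b - a)).eventually (hΦ.and htrunc))
  refine ⟨N₀, fun N hN hN1 e₂ e₃ he₂ he₃ v hv0 hrec n hn => ?_⟩
  obtain ⟨hΦN, htruncN⟩ := hN₀ N hN
  set h := (b - a) / N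
  have hh : 0 ≤ h := div_nonneg (sub_nonneg.2 hab.le) N.cast_nonneg
  have hNh : N * h = b - a := mul_div_cancel₀ _ (by positivity)
  have hgrid : ∀ m < N, a + m * h ∈ Icc a b ∧ a + m * h + h ≤ b := by
    intro m hm
    have : (m + 1 : ℝ) * h ≤ N * h := by gcongr; exact_mod_cast hm
    exact ⟨⟨le_add_of_nonneg_right (by positivity), by nlinarith⟩, by nlinarith⟩
  refine (abs_sub_le_of_consistent_one_step_s7 (t := fun m => a + m * h) (ρ := 1)
    (Φ := fun m y => τ.rbfIncrement f h (a + m * h) y (e₂ m) (e₃ m))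
    hh hL hη.le hNh.le (by linarith [min_le_right ε 1]) (fun m hm => hlip _ (hgrid m hm).1)
    (fun m hm => ?_) (fun m hm y hy => ?_) (by simpa using hv0) hrec n hn).trans_lt
    (by linarith [min_le_left ε 1])
  · have hnext : a + ((m + 1 : ℕ) : ℝ) * h = a + m * h + h := by push_cast; ring
    simpa only [hnext] using htruncN _ (hgrid m hm).1 hh (hgrid m hm).2
  · have hU' : |u (a + m * h)| ≤ U := hU _ (hgrid m hm).1
    have hyU : |y| ≤ U + 1 := by linarith [abs_sub_abs_le_abs_sub y (u (a + m * h))]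
    exact (hΦN _ y _ _ ⟨(hgrid m hm).1, abs_le.1 hyU, abs_le.1 (he₂ m hm),
      abs_le.1 (he₃ m hm)⟩).le

/-- Convergence of the three-stage RBF Runge–Kutta method with bounded shape
parameters, uniformly over all admissible choices of the shape parameters. -/
theorem stmt_7 (a b L : ℝ) (hab : a < b)
    (f : ℝ → ℝ → ℝ)
    (hfc : Continuous (fun p : ℝ × ℝ => f p.1 p.2))
    (hlip : ∀ t ∈ Set.Icc a b, ∀ u₁ u₂ : ℝ, |f t u₁ - f t u₂| ≤ L * |u₁ - u₂|)
    (u : ℝ → ℝ)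
    (hu : ∀ t ∈ Set.Icc a b, HasDerivAt u (f t (u t)) t)
    (b₁ b₂ b₃ c₂ c₃ a₂₁ a₃₁ a₃₂ : ℝ)
    (hb : b₁ + b₂ + b₃ = 1) (ha21 : a₂₁ = c₂) (ha3 : a₃₁ + a₃₂ = c₃)
    (hoc1 : b₂ * c₂ + b₃ * c₃ = 1 / 2)
    (hoc2 : b₂ * c₂ ^ 2 + b₃ * c₃ ^ 2 = 1 / 3)
    (hoc3 : a₃₂ * b₃ * c₂ = 1 / 6)
    (M : ℝ) (hM : 0 ≤ M) :
    ∀ ε > 0, ∃ N₀ : ℕ, ∀ N : ℕ, N₀ ≤ N → 1 ≤ N →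
      ∀ e₂ e₃ : ℕ → ℝ, (∀ n < N, |e₂ n| ≤ M) → (∀ n < N, |e₃ n| ≤ M) →
      ∀ v : ℕ → ℝ, v 0 = u a →
      (∀ n < N,
        v (n + 1) = v n + ((b - a) / N) *
          (b₁ * f (a + n * ((b - a) / N)) (v n) +
           b₂ * f (a + n * ((b - a) / N) + c₂ * ((b - a) / N))
             (v n * Real.exp (-(e₂ n) * (c₂ * ((b - a) / N)) ^ 2) +
              ((b - a) / N) * a₂₁ * f (a + n * ((b - a) / N)) (v n)) +
           b₃ * f (a + n * ((b - a) / N) + c₃ * ((b - a) / N))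
             (v n * Real.exp (-(e₃ n) * (c₃ * ((b - a) / N)) ^ 2) +
              ((b - a) / N) *
                (a₃₁ * f (a + n * ((b - a) / N)) (v n) +
                 a₃₂ * f (a + n * ((b - a) / N) + c₂ * ((b - a) / N))
                   (v n * Real.exp (-(e₂ n) * (c₂ * ((b - a) / N)) ^ 2) +
                    ((b - a) / N) * a₂₁ * f (a + n * ((b - a) / N)) (v n)))))) →
      ∀ n ≤ N, |v n - u (a + n * ((b - a) / N))| < ε :=
  stmt_7_general a b L hab f hfc hlip u hu b₁ b₂ b₃ c₂ c₃ a₂₁ a₃₁ a₃₂ hb M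
end

section
/- Let f : ℝ → ℝ → ℝ be C^∞ (jointly smooth), let t₀ ∈ ℝ, and let u be a solution of u'(t) = f(t, u(t)) on a neighborhood of t₀ with u₀ = u(t₀). Let b₁, b₂, c₂ ∈ ℝ satisfy b₁ + b₂ = 1 and b₂c₂ = 1/2, and let e ∈ ℝ be arbitrary. Define τ(h) = (u(t₀+h) − u₀)/h − (b₁k₁ + b₂k₂), where k₁ = f(t₀, u₀) and k₂ = f(t₀ + c₂h, u₀·exp(−e(c₂h)²) + h c₂ k₁). Then τ(h) = O(h²) as h → 0; that is, the two-stage RBF Runge–Kutta method retains second-order accuracy for any real shape parameter. -/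
open Real Filter Asymptotics Topology

lemma mvt_isBigO {φ ψ : ℝ → ℝ} {n : ℕ}
    (h0 : φ 0 = 0)
    (hd : ∀ᶠ x in 𝓝 (0:ℝ), HasDerivAt φ (ψ x) x)
    (hO : ψ =O[𝓝 (0:ℝ)] fun x => x ^ n) :
    φ =O[𝓝 (0:ℝ)] fun x => x ^ (n+1) := by
  obtain ⟨C, hC⟩ := hO.bound
  have hev := hd.and hC
  rw [Metric.eventually_nhds_iff] at hev
  obtain ⟨δ, hδ, H⟩ := hev
  rw [isBigO_iff]
  refine ⟨|C|, Metric.eventually_nhds_iff.mpr ⟨δ, hδ, fun {x} hx => ?_⟩⟩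
  have hsub : segment ℝ 0 x ⊆ Metric.ball (0:ℝ) δ :=
    (convex_ball (0:ℝ) δ).segment_subset (Metric.mem_ball_self hδ)
      (by simpa [Real.dist_eq] using hx)
  have habs : ∀ y ∈ segment ℝ 0 x, |y| ≤ |x| := by
    intro y hy
    rw [segment_eq_image] at hy
    obtain ⟨t, ht, rfl⟩ := hy
    simp only [smul_eq_mul, mul_zero, zero_add, Set.mem_Icc] at *
    rw [abs_mul]
    calc |t| * |x| ≤ 1 * |x| := by
          apply mul_le_mul_of_nonneg_right _ (abs_nonneg x)
          rw [abs_le]; constructor <;> linarith [ht.1, ht.2]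
      _ = |x| := one_mul _
  have key := Convex.norm_image_sub_le_of_norm_hasDerivWithin_le
    (f := φ) (f' := ψ) (s := segment ℝ 0 x) (C := |C| * |x| ^ n)
    (fun y hy => ((H (by simpa [Real.dist_eq] using hsub hy)).1).hasDerivWithinAt)
    (fun y hy => by
      have h1 := (H (by simpa [Real.dist_eq] using hsub hy)).2
      calc ‖ψ y‖ ≤ C * ‖y ^ n‖ := h1
        _ ≤ |C| * |y| ^ n := by
            rw [norm_pow]
            exact mul_le_mul_of_nonneg_right (le_abs_self C)
              (pow_nonneg (abs_nonneg _) n)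
        _ ≤ |C| * |x| ^ n := by
            exact mul_le_mul_of_nonneg_left
              (pow_le_pow_left₀ (abs_nonneg _) (habs y hy) n) (abs_nonneg C))
    (convex_segment 0 x) (left_mem_segment ℝ 0 x) (right_mem_segment ℝ 0 x)
  rw [h0, sub_zero, sub_zero] at key
  calc ‖φ x‖ ≤ |C| * |x| ^ n * ‖x‖ := key
    _ = |C| * ‖x ^ (n+1)‖ := by rw [norm_pow]; simp [Real.norm_eq_abs, pow_succ]; ring

/-- For any real shape parameter, the two-stage RBF Runge–Kutta method satisfying
the second-order conditions has local truncation error `O(h²)` as `h → 0`. -/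
theorem stmt_10 (f : ℝ → ℝ → ℝ)
    (hf : ContDiff ℝ (⊤ : ℕ∞) (fun p : ℝ × ℝ => f p.1 p.2))
    (t₀ : ℝ) (u : ℝ → ℝ)
    (hu : ∀ᶠ t in 𝓝 t₀, HasDerivAt u (f t (u t)) t)
    (b₁ b₂ c₂ : ℝ) (hb : b₁ + b₂ = 1) (hoc : b₂ * c₂ = 1 / 2)
    (e : ℝ) :
    (fun h : ℝ =>
        (u (t₀ + h) - u t₀) / h
          - (b₁ * f t₀ (u t₀)
             + b₂ * f (t₀ + c₂ * h)
                 (u t₀ * Real.exp (-e * (c₂ * h) ^ 2) + h * c₂ * f t₀ (u t₀))))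
      =O[𝓝[≠] (0 : ℝ)] fun h => h ^ 2 := by
  set F : ℝ × ℝ → ℝ := fun p => f p.1 p.2 with hFdef
  have hf' : ContDiff ℝ (⊤ : ℕ∞) F := hf.of_le (by simp)
  have hone : ((⊤ : ℕ∞) : WithTop ℕ∞) ≠ 0 := by simp
  have hFdiff : Differentiable ℝ F := hf'.differentiable hone
  set k₁ : ℝ := f t₀ (u t₀) with hk₁def
  set γ : ℝ → ℝ × ℝ := fun h =>
    (t₀ + c₂ * h, u t₀ * Real.exp (-e * (c₂ * h) ^ 2) + h * c₂ * k₁) with hγdef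
  set Φ : ℝ → ℝ := fun h => b₁ * k₁ + b₂ * F (γ h) with hΦdef
  set v : ℝ → ℝ := fun h => f (t₀ + h) (u (t₀ + h)) with hvdef
  set g : ℝ → ℝ := fun h => u (t₀ + h) - u t₀ - h * Φ h with hgdef
  -- smoothness of Φ
  have hγs : ContDiff ℝ (⊤ : ℕ∞) γ := by
    apply ContDiff.prodMk
    · fun_prop
    · fun_prop
  have hΦs : ContDiff ℝ (⊤ : ℕ∞) Φ :=
    contDiff_const.add (contDiff_const.mul (hf'.comp hγs))
  have hΦd : Differentiable ℝ Φ := hΦs.differentiable hone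
  have hdΦs : ContDiff ℝ (⊤ : ℕ∞) (deriv Φ) := (contDiff_infty_iff_deriv.mp hΦs).2
  have hdΦd : Differentiable ℝ (deriv Φ) := hdΦs.differentiable hone
  have hddΦd : Differentiable ℝ (deriv (deriv Φ)) :=
    ((contDiff_infty_iff_deriv.mp hdΦs).2).differentiable hone
  set G : ℝ → ℝ := fun h => v h - Φ h - h * deriv Φ h with hGdef
  set A : ℝ := (fderiv ℝ F (t₀, u t₀)) (1, k₁) with hAdef
  set G₂ : ℝ → ℝ := fun h =>
    (fderiv ℝ F (t₀ + h, u (t₀ + h))) (1, v h)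
      - 2 * deriv Φ h - h * deriv (deriv Φ) h with hG₂def
  -- u solves the ODE near 0 (in shifted variable)
  have humem : ∀ᶠ h in 𝓝 (0:ℝ), HasDerivAt u (f (t₀ + h) (u (t₀ + h))) (t₀ + h) := by
    have ht : Tendsto (fun h : ℝ => t₀ + h) (𝓝 0) (𝓝 t₀) := by
      simpa using (continuous_add_left t₀).tendsto' (0 : ℝ) t₀ (by simp)
    exact ht.eventually hu
  have hu' : ∀ᶠ h in 𝓝 (0:ℝ), HasDerivAt (fun s => u (t₀ + s)) (v h) h := by
    filter_upwards [humem] with h hh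
    have hshift : HasDerivAt (fun s : ℝ => t₀ + s) 1 h := by
      simpa using (hasDerivAt_id h).const_add t₀
    have := hh.comp h hshift
    simpa [hvdef, Function.comp_def] using this
  -- derivative of v near 0
  have hvd : ∀ᶠ h in 𝓝 (0:ℝ),
      HasDerivAt v ((fderiv ℝ F (t₀ + h, u (t₀ + h))) (1, v h)) h := by
    filter_upwards [hu'] with h hh
    have hγ₁ : HasDerivAt (fun s : ℝ => (t₀ + s, u (t₀ + s))) ((1 : ℝ), v h) h := by
      exact HasDerivAt.prodMk (by simpa using (hasDerivAt_id h).const_add t₀) hh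
    have := (hFdiff (t₀ + h, u (t₀ + h))).hasFDerivAt.comp_hasDerivAt h hγ₁
    exact this
  -- derivative of γ at 0
  have hγderiv : HasDerivAt γ (c₂, c₂ * k₁) 0 := by
    apply HasDerivAt.prodMk
    · simpa using ((hasDerivAt_id (0:ℝ)).const_mul c₂).const_add t₀
    · have h1 : HasDerivAt (fun h : ℝ => -e * (c₂ * h) ^ 2) (0 : ℝ) 0 := by
        have := (((hasDerivAt_id (0:ℝ)).const_mul c₂).pow 2).const_mul (-e)
        simpa using this
      have h2 : HasDerivAt (fun h : ℝ => u t₀ * Real.exp (-e * (c₂ * h) ^ 2)) (0 : ℝ) 0 := by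
        have := (h1.exp).const_mul (u t₀)
        simpa using this
      have h3 : HasDerivAt (fun h : ℝ => h * c₂ * k₁) (c₂ * k₁) 0 := by
        have := ((hasDerivAt_id (0:ℝ)).mul_const c₂).mul_const k₁
        simpa using this
      have := h2.add h3
      simpa [Pi.add_def] using this
  have hγ0 : γ 0 = (t₀, u t₀) := by
    simp [hγdef]
  -- derivative of Φ at 0
  have hFγ : HasDerivAt (fun h => F (γ h)) (c₂ * A) 0 := by
    have hL : HasFDerivAt F (fderiv ℝ F (γ 0)) (γ 0) := (hFdiff (γ 0)).hasFDerivAt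
    have := hL.comp_hasDerivAt 0 hγderiv
    have heq : (fderiv ℝ F (γ 0)) (c₂, c₂ * k₁) = c₂ * A := by
      rw [hγ0]
      have : ((c₂ : ℝ), c₂ * k₁) = c₂ • ((1 : ℝ), k₁) := by
        simp [Prod.smul_mk]
      rw [this, map_smul, hAdef]
      simp
    rw [heq] at this
    exact this
  have hΦ'0 : HasDerivAt Φ (b₂ * (c₂ * A)) 0 := by
    have := (hFγ.const_mul b₂).const_add (b₁ * k₁)
    exact this
  have hdΦ0 : deriv Φ 0 = b₂ * (c₂ * A) := hΦ'0.deriv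
  -- eventual derivative of g is G
  have hg0 : g 0 = 0 := by simp [hgdef]
  have hg' : ∀ᶠ h in 𝓝 (0:ℝ), HasDerivAt g (G h) h := by
    filter_upwards [hu'] with h hh
    have h1 : HasDerivAt (fun s : ℝ => s * Φ s) (Φ h + h * deriv Φ h) h := by
      have := (hasDerivAt_id h).mul ((hΦd h).hasDerivAt)
      simpa [Pi.mul_def] using this
    have := (hh.sub_const (u t₀)).sub h1
    exact this.congr_deriv (by simp only [hGdef]; ring)
  -- G at 0
  have hG0 : G 0 = 0 := by
    have hΦ0 : Φ 0 = k₁ := by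
      have : F (γ 0) = k₁ := by rw [hγ0]
      simp [hΦdef, this]
      linear_combination k₁ * hb
    simp [hGdef, hΦ0, hvdef, hk₁def]
  -- eventual derivative of G is G₂
  have hG' : ∀ᶠ h in 𝓝 (0:ℝ), HasDerivAt G (G₂ h) h := by
    filter_upwards [hvd] with h hh
    have h2 : HasDerivAt (fun s : ℝ => s * deriv Φ s)
        (deriv Φ h + h * deriv (deriv Φ) h) h := by
      have := (hasDerivAt_id h).mul ((hdΦd h).hasDerivAt)
      simpa [Pi.mul_def] using this
    have := (hh.sub ((hΦd h).hasDerivAt)).sub h2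
    exact this.congr_deriv (by simp only [hG₂def]; ring)
  -- G₂ vanishes at 0 and is differentiable there
  have hG₂0 : G₂ 0 = 0 := by
    have hv0 : v 0 = k₁ := by simp [hvdef, hk₁def]
    have : (fderiv ℝ F (t₀ + 0, u (t₀ + 0))) (1, v 0) = A := by
      rw [hv0]; simp [hAdef]
    simp only [hG₂def, this, hdΦ0, zero_mul, mul_zero, sub_zero]
    linear_combination (-2 * A) * hoc
  have hG₂diff : DifferentiableAt ℝ G₂ 0 := by
    have hud : DifferentiableAt ℝ (fun s => u (t₀ + s)) 0 :=
      hu'.self_of_nhds.differentiableAt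
    have hγ₁d : DifferentiableAt ℝ (fun s : ℝ => (t₀ + s, u (t₀ + s))) 0 :=
      DifferentiableAt.prodMk (by fun_prop) hud
    have hvdiff : DifferentiableAt ℝ v 0 := hvd.self_of_nhds.differentiableAt
    have hfdF : Differentiable ℝ (fderiv ℝ F) := by
      have : ContDiff ℝ (⊤ : ℕ∞) (fderiv ℝ F) :=
        hf'.fderiv_right (le_refl _)
      exact this.differentiable hone
    have t1 : DifferentiableAt ℝ
        (fun h : ℝ => (fderiv ℝ F (t₀ + h, u (t₀ + h))) (1, v h)) 0 := by
      exact DifferentiableAt.clm_apply ((hfdF.differentiableAt).comp 0 hγ₁d)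
        ((differentiableAt_const _).prodMk hvdiff)
    exact (t1.sub ((hdΦd 0).const_mul 2)).sub (differentiableAt_id.mul (hddΦd 0))
  have hG₂O : G₂ =O[𝓝 (0:ℝ)] fun x => x ^ 1 := by
    have := hG₂diff.hasFDerivAt.isBigO_sub
    simp only [hG₂0, sub_zero] at this
    simpa [pow_one] using this
  have hGO : G =O[𝓝 (0:ℝ)] fun x => x ^ 2 := mvt_isBigO hG0 hG' hG₂O
  have hgO : g =O[𝓝 (0:ℝ)] fun x => x ^ 3 := mvt_isBigO hg0 hg' hGO
  -- conclude
  have hfin : (fun h : ℝ => g h * h⁻¹) =O[𝓝[≠] (0:ℝ)] fun h : ℝ => h ^ 3 * h⁻¹ :=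
    (hgO.mono nhdsWithin_le_nhds).mul (isBigO_refl _ _)
  have he₂ : (fun h : ℝ => h ^ 3 * h⁻¹) =ᶠ[𝓝[≠] (0:ℝ)] fun h : ℝ => h ^ 2 := by
    filter_upwards [self_mem_nhdsWithin] with h hh
    have : h ≠ 0 := hh
    field_simp
  have he₁ : (fun h : ℝ =>
        (u (t₀ + h) - u t₀) / h
          - (b₁ * f t₀ (u t₀)
             + b₂ * f (t₀ + c₂ * h)
                 (u t₀ * Real.exp (-e * (c₂ * h) ^ 2) + h * c₂ * f t₀ (u t₀))))
      =ᶠ[𝓝[≠] (0:ℝ)] fun h : ℝ => g h * h⁻¹ := by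
    filter_upwards [self_mem_nhdsWithin] with h hh
    have hne : h ≠ 0 := hh
    simp only [hgdef, hΦdef, hγdef, hFdef, hk₁def]
    field_simp
  exact (hfin.congr' he₁.symm he₂)
end

section
/- Let f : ℝ → ℝ → ℝ be C^∞ (jointly smooth), let t₀ ∈ ℝ, and let u be a solution of u'(t) = f(t, u(t)) on a neighborhood of t₀ with u₀ = u(t₀) ≠ 0. Take the coefficients a₂₁ = c₂ = 2/3, b₁ = 1/4, b₂ = 3/4, and the shape parameter e = −(f_t + f_u·f)/(2u₀) = −u''(t₀)/(2u₀), where f, f_t, f_u denote f and its partial derivatives ∂f/∂t, ∂f/∂u evaluated at (t₀, u₀). Define τ(h) = (u(t₀+h) − u₀)/h − (b₁k₁ + b₂k₂), where k₁ = f(t₀, u₀) and k₂ = f(t₀ + c₂h, u₀·exp(−e(c₂h)²) + h c₂ k₁). Then τ(h) = O(h³) as h → 0; that is, this two-stage RBF Runge–Kutta method is third-order accurate. -/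
open Real Filter Asymptotics Topology

lemma abs_le_of_mem_segment {x h : ℝ} (hx : x ∈ segment ℝ 0 h) : |x| ≤ |h| := by
  rw [segment_eq_uIcc] at hx
  rcases Set.mem_uIcc.mp hx with ⟨h1, h2⟩ | ⟨h1, h2⟩
  · rw [abs_of_nonneg h1]; exact h2.trans (le_abs_self h)
  · rw [abs_of_nonpos h2]; exact (neg_le_neg h1).trans (neg_le_abs h)

lemma bigO_step {g g' : ℝ → ℝ} {k : ℕ}
    (hd : ∀ᶠ h in 𝓝 (0:ℝ), HasDerivAt g (g' h) h)
    (h0 : g 0 = 0) (hO : g' =O[𝓝 (0:ℝ)] fun h => h ^ k) :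
    g =O[𝓝 (0:ℝ)] fun h => h ^ (k + 1) := by
  obtain ⟨C, hC0, hC⟩ := hO.exists_nonneg
  rw [isBigOWith_iff] at hC
  obtain ⟨ε, hε, hball⟩ := Metric.eventually_nhds_iff.mp (hd.and hC)
  refine IsBigO.of_bound C ?_
  filter_upwards [Metric.ball_mem_nhds (0:ℝ) hε] with h hh
  have hhε : |h| < ε := by simpa [Real.dist_eq] using hh
  have hseg : ∀ x ∈ segment ℝ 0 h, dist x 0 < ε := by
    intro x hx
    simp only [Real.dist_eq, sub_zero]
    exact lt_of_le_of_lt (abs_le_of_mem_segment hx) hhε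
  have key := (convex_segment (0:ℝ) h).norm_image_sub_le_of_norm_hasDerivWithin_le
      (f' := g') (C := C * |h| ^ k)
      (fun x hx => ((hball (hseg x hx)).1).hasDerivWithinAt)
      (fun x hx => by
        have h1 := (hball (hseg x hx)).2
        have h2 : ‖x ^ k‖ ≤ |h| ^ k := by
          rw [Real.norm_eq_abs, abs_pow]
          exact pow_le_pow_left₀ (abs_nonneg x) (abs_le_of_mem_segment hx) k
        calc ‖g' x‖ ≤ C * ‖x ^ k‖ := h1
          _ ≤ C * |h| ^ k := by nlinarith [abs_nonneg (x ^ k)])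
      (left_mem_segment ℝ 0 h) (right_mem_segment ℝ 0 h)
  rw [h0, sub_zero, sub_zero] at key
  calc ‖g h‖ ≤ C * |h| ^ k * ‖h‖ := key
    _ = C * ‖h ^ (k+1)‖ := by
        rw [Real.norm_eq_abs, Real.norm_eq_abs, abs_pow, pow_succ]; ring

private lemma HasDerivAt.congr_d {g : ℝ → ℝ} {a b x : ℝ}
    (h : HasDerivAt g a x) (hab : a = b) : HasDerivAt g b x := hab ▸ h

set_option maxHeartbeats 2000000 in
/-- The two-stage RBF Runge–Kutta method with `a₂₁ = c₂ = 2/3`, `b₁ = 1/4`,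
`b₂ = 3/4` and shape parameter `e = −(f_t + f_u f)/(2u₀) = −u''(t₀)/(2u₀)` is
third-order accurate: the local truncation error is `O(h³)` as `h → 0`. -/
theorem stmt_11 (f : ℝ → ℝ → ℝ)
    (hf : ContDiff ℝ (⊤ : ℕ∞) (fun p : ℝ × ℝ => f p.1 p.2))
    (t₀ : ℝ) (u : ℝ → ℝ)
    (hu : ∀ᶠ t in 𝓝 t₀, HasDerivAt u (f t (u t)) t)
    (hu₀ : u t₀ ≠ 0)
    (b₁ b₂ c₂ : ℝ) (hb₁ : b₁ = 1 / 4) (hb₂ : b₂ = 3 / 4) (hc₂ : c₂ = 2 / 3)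
    (ft fu e : ℝ)
    (hft : ft = deriv (fun s => f s (u t₀)) t₀)
    (hfu : fu = deriv (fun y => f t₀ y) (u t₀))
    (he : e = -(ft + fu * f t₀ (u t₀)) / (2 * u t₀)) :
    (fun h : ℝ =>
        (u (t₀ + h) - u t₀) / h
          - (b₁ * f t₀ (u t₀)
             + b₂ * f (t₀ + c₂ * h)
                 (u t₀ * Real.exp (-e * (c₂ * h) ^ 2) + h * c₂ * f t₀ (u t₀))))
      =O[𝓝[≠] (0 : ℝ)] fun h => h ^ 3 := by
  obtain ⟨s, hs, hsopen, hts⟩ := eventually_nhds_iff.mp hu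
  -- smoothness of u
  have hfC : ∀ n : ℕ, ContDiff ℝ n (fun p : ℝ × ℝ => f p.1 p.2) := fun n => hf.of_le (by exact_mod_cast le_top)
  have hsmooth : ∀ n : ℕ, ContDiffOn ℝ n u s := by
    intro n; induction n with
    | zero =>
      rw [Nat.cast_zero, contDiffOn_zero]
      exact fun t ht => ((hs t ht).differentiableAt.continuousAt).continuousWithinAt
    | succ n ih =>
      rw [show ((n+1 : ℕ) : WithTop ℕ∞) = (n : WithTop ℕ∞) + 1 by push_cast; rfl,
        contDiffOn_succ_iff_deriv_of_isOpen hsopen]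
      refine ⟨fun t ht => ((hs t ht).differentiableAt).differentiableWithinAt, ?_, ?_⟩
      · intro h; exact absurd h (by simp)
      · have hcomp : ContDiffOn ℝ n (fun t => f t (u t)) s :=
          (hfC n).comp_contDiffOn (contDiffOn_id.prodMk ih)
        exact hcomp.congr fun t ht => (hs t ht).deriv
  -- iterated derivative facts
  have hCDw : ∀ n m : ℕ, ContDiffOn ℝ m (deriv^[n] u) s := by
    intro n; induction n with
    | zero => exact fun m => hsmooth m
    | succ n ih =>
      intro m
      rw [Function.iterate_succ_apply']
      exact (ih (m+1)).deriv_of_isOpen hsopen (by push_cast; rfl)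
  have hD : ∀ (n : ℕ), ∀ t ∈ s, HasDerivAt (deriv^[n] u) (deriv^[n+1] u t) t := by
    intro n t ht
    have h1 : DifferentiableAt ℝ (deriv^[n] u) t :=
      ((hCDw n 1).differentiableOn (by norm_num)).differentiableAt (hsopen.mem_nhds ht)
    rw [Function.iterate_succ_apply']
    exact h1.hasDerivAt
  have hCw : ∀ n : ℕ, ContinuousOn (deriv^[n] u) s := fun n => (hCDw n 0).continuousOn
  -- first and second derivative values at t₀
  have hw0 : deriv u t₀ = f t₀ (u t₀) := (hs t₀ hts).deriv
  have hFd : HasFDerivAt (fun p : ℝ × ℝ => f p.1 p.2)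
      (fderiv ℝ (fun p : ℝ × ℝ => f p.1 p.2) (t₀, u t₀)) (t₀, u t₀) :=
    ((hf.differentiable (by simp)) (t₀, u t₀)).hasFDerivAt
  set L := fderiv ℝ (fun p : ℝ × ℝ => f p.1 p.2) (t₀, u t₀) with hLdef
  have hft' : HasDerivAt (fun s => f s (u t₀)) (L (1, 0)) t₀ :=
    by have := hFd.comp_hasDerivAt t₀ ((hasDerivAt_id t₀).prodMk (hasDerivAt_const t₀ (u t₀))); exact this
  have hfu' : HasDerivAt (fun y => f t₀ y) (L (0, 1)) (u t₀) :=
    by have := hFd.comp_hasDerivAt (u t₀) ((hasDerivAt_const (u t₀) t₀).prodMk (hasDerivAt_id (u t₀))); exact this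
  have hftL : ft = L (1, 0) := by rw [hft, hft'.deriv]
  have hfuL : fu = L (0, 1) := by rw [hfu, hfu'.deriv]
  have hv : HasDerivAt (fun t => f t (u t)) (L (1, f t₀ (u t₀))) t₀ :=
    by have := hFd.comp_hasDerivAt t₀ ((hasDerivAt_id t₀).prodMk (hs t₀ hts)); exact this
  have hw1 : deriv^[2] u t₀ = ft + fu * f t₀ (u t₀) := by
    have heq : deriv u =ᶠ[𝓝 t₀] fun t => f t (u t) :=
      Filter.eventually_of_mem (hsopen.mem_nhds hts) (fun t ht => (hs t ht).deriv)
    have h2 : deriv^[2] u t₀ = deriv (deriv u) t₀ := by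
      rw [show (2:ℕ) = 1 + 1 by rfl, Function.iterate_succ_apply', Function.iterate_one]
    rw [h2, heq.deriv_eq, hv.deriv]
    have hsplit : ((1 : ℝ), f t₀ (u t₀)) = (1, 0) + f t₀ (u t₀) • ((0:ℝ), (1:ℝ)) := by simp
    rw [hsplit, map_add, map_smul, hftL, hfuL, smul_eq_mul]; ring
  -- shifted derivative chains
  have hmem : ∀ c : ℝ, ∀ᶠ h in 𝓝 (0:ℝ), t₀ + c * h ∈ s := by
    intro c
    have hT : Tendsto (fun h : ℝ => t₀ + c * h) (𝓝 0) (𝓝 t₀) := by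
      have hc : Continuous (fun h : ℝ => t₀ + c * h) := by continuity
      simpa using hc.tendsto (0:ℝ)
    exact hT.eventually_mem (hsopen.mem_nhds hts)
  have hshift : ∀ (n m : ℕ) (c : ℝ), m = n + 1 → ∀ᶠ h in 𝓝 (0:ℝ),
      HasDerivAt (fun h => deriv^[n] u (t₀ + c * h)) (c * deriv^[m] u (t₀ + c * h)) h := by
    intro n m c hm
    subst hm
    filter_upwards [hmem c] with h hh
    have h1 : HasDerivAt (fun h : ℝ => t₀ + c * h) c h := by
      have := (hasDerivAt_const h t₀).add ((hasDerivAt_id h).const_mul c)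
      simp only [zero_add, mul_one] at this; exact this
    have := (hD n _ hh).comp h h1
    simpa [Function.comp_def, mul_comm] using this
  have hlinear : ∀ (a x : ℝ), HasDerivAt (fun h : ℝ => a * h) a x := fun a x => by
    simpa using (hasDerivAt_id x).const_mul a
  have hlinear2 : ∀ (a b x : ℝ), HasDerivAt (fun h : ℝ => h * a * b) (a * b) x := by
    intro a b x
    simpa using ((hasDerivAt_id x).mul_const a).mul_const b
  -- exp chains
  have hE : ∀ h : ℝ, HasDerivAt (fun h : ℝ => Real.exp (-e * (c₂ * h) ^ 2))
      (Real.exp (-e * (c₂ * h) ^ 2) * (-2 * e * c₂ ^ 2 * h)) h := by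
    intro h
    have hlin := hlinear c₂ h
    have hp : HasDerivAt (fun h : ℝ => -e * (c₂ * h) ^ 2) (-2 * e * c₂ ^ 2 * h) h := by
      have := (hlin.pow 2).const_mul (-e)
      exact this.congr_d (by push_cast; ring)
    simpa using hp.exp
  have hE1 : ∀ h : ℝ, HasDerivAt
      (fun h : ℝ => Real.exp (-e * (c₂ * h) ^ 2) * (-2 * e * c₂ ^ 2 * h))
      (Real.exp (-e * (c₂ * h) ^ 2) * ((-2 * e * c₂ ^ 2) + (2 * e * c₂ ^ 2 * h) ^ 2)) h := by
    intro h
    have hlin := hlinear (-2 * e * c₂ ^ 2) h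
    have := (hE h).mul hlin
    exact this.congr_d (by ring)
  have hE2 : ∀ h : ℝ, HasDerivAt
      (fun h : ℝ => Real.exp (-e * (c₂ * h) ^ 2) * ((-2 * e * c₂ ^ 2) + (2 * e * c₂ ^ 2 * h) ^ 2))
      (Real.exp (-e * (c₂ * h) ^ 2) *
        ((-2 * e * c₂ ^ 2 * h) * ((-2 * e * c₂ ^ 2) + (2 * e * c₂ ^ 2 * h) ^ 2)
          + 2 * (2 * e * c₂ ^ 2) ^ 2 * h)) h := by
    intro h
    have hlin := hlinear (2 * e * c₂ ^ 2) h
    have hq : HasDerivAt (fun h : ℝ => (-2 * e * c₂ ^ 2) + (2 * e * c₂ ^ 2 * h) ^ 2)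
        (2 * (2 * e * c₂ ^ 2 * h) * (2 * e * c₂ ^ 2)) h := by
      have := (hasDerivAt_const h (-2 * e * c₂ ^ 2)).add (hlin.pow 2)
      exact this.congr_d (by push_cast; ring)
    have := (hE h).mul hq
    exact this.congr_d (by ring)
  -- continuity of shifted iterated derivatives at 0
  have hca : ∀ (n : ℕ) (c : ℝ), ContinuousAt (fun h : ℝ => deriv^[n] u (t₀ + c * h)) 0 := by
    intro n c
    have h1 : ContinuousAt (deriv^[n] u) t₀ := (hCw n).continuousAt (hsopen.mem_nhds hts)
    have hT : Tendsto (fun h : ℝ => t₀ + c * h) (𝓝 0) (𝓝 t₀) := by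
      have hc : Continuous (fun h : ℝ => t₀ + c * h) := by continuity
      simpa using hc.tendsto (0:ℝ)
    have h3 := Filter.Tendsto.comp (h1 : Tendsto _ _ _) hT
    simpa [Function.comp_def, ContinuousAt] using h3
  have hca1 : ∀ (n : ℕ), ContinuousAt (fun h : ℝ => deriv^[n] u (t₀ + h)) 0 := by
    intro n
    have := hca n 1
    simpa [one_mul] using this
  ----------------------------------------------------------------
  -- The D chain : D h := u(t₀+c₂ h) − (u₀ e^{−e(c₂h)²} + h c₂ k₁)
  ----------------------------------------------------------------
  have hDd0 : ∀ᶠ h in 𝓝 (0:ℝ), HasDerivAt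
      (fun h : ℝ => u (t₀ + c₂ * h)
          - (u t₀ * Real.exp (-e * (c₂ * h) ^ 2) + h * c₂ * f t₀ (u t₀)))
      (c₂ * deriv^[1] u (t₀ + c₂ * h)
          - (u t₀ * (Real.exp (-e * (c₂ * h) ^ 2) * (-2 * e * c₂ ^ 2 * h))
             + c₂ * f t₀ (u t₀))) h := by
    filter_upwards [hshift 0 1 c₂ rfl] with h hd
    exact hd.sub (((hE h).const_mul (u t₀)).add (hlinear2 c₂ (f t₀ (u t₀)) h))
  have hDd1 : ∀ᶠ h in 𝓝 (0:ℝ), HasDerivAt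
      (fun h : ℝ => c₂ * deriv^[1] u (t₀ + c₂ * h)
          - (u t₀ * (Real.exp (-e * (c₂ * h) ^ 2) * (-2 * e * c₂ ^ 2 * h))
             + c₂ * f t₀ (u t₀)))
      (c₂ ^ 2 * deriv^[2] u (t₀ + c₂ * h)
          - u t₀ * (Real.exp (-e * (c₂ * h) ^ 2)
              * ((-2 * e * c₂ ^ 2) + (2 * e * c₂ ^ 2 * h) ^ 2))) h := by
    filter_upwards [hshift 1 2 c₂ rfl] with h hd
    exact ((hd.const_mul c₂).sub
      (((hE1 h).const_mul (u t₀)).add (hasDerivAt_const h (c₂ * f t₀ (u t₀))))).congr_d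
      (by ring)
  have hDd2 : ∀ᶠ h in 𝓝 (0:ℝ), HasDerivAt
      (fun h : ℝ => c₂ ^ 2 * deriv^[2] u (t₀ + c₂ * h)
          - u t₀ * (Real.exp (-e * (c₂ * h) ^ 2)
              * ((-2 * e * c₂ ^ 2) + (2 * e * c₂ ^ 2 * h) ^ 2)))
      (c₂ ^ 3 * deriv^[3] u (t₀ + c₂ * h)
          - u t₀ * (Real.exp (-e * (c₂ * h) ^ 2) *
              ((-2 * e * c₂ ^ 2 * h) * ((-2 * e * c₂ ^ 2) + (2 * e * c₂ ^ 2 * h) ^ 2)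
                + 2 * (2 * e * c₂ ^ 2) ^ 2 * h))) h := by
    filter_upwards [hshift 2 3 c₂ rfl] with h hd
    exact ((hd.const_mul (c₂ ^ 2)).sub ((hE2 h).const_mul (u t₀))).congr_d (by ring)
  -- zero values
  have hD0 : (fun h : ℝ => u (t₀ + c₂ * h)
      - (u t₀ * Real.exp (-e * (c₂ * h) ^ 2) + h * c₂ * f t₀ (u t₀))) 0 = 0 := by
    simp
  have hD10 : (fun h : ℝ => c₂ * deriv^[1] u (t₀ + c₂ * h)
      - (u t₀ * (Real.exp (-e * (c₂ * h) ^ 2) * (-2 * e * c₂ ^ 2 * h))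
         + c₂ * f t₀ (u t₀))) 0 = 0 := by
    simp [Function.iterate_one, hw0]
  have hD20 : (fun h : ℝ => c₂ ^ 2 * deriv^[2] u (t₀ + c₂ * h)
      - u t₀ * (Real.exp (-e * (c₂ * h) ^ 2)
          * ((-2 * e * c₂ ^ 2) + (2 * e * c₂ ^ 2 * h) ^ 2))) 0 = 0 := by
    have h1 : e * u t₀ = -(ft + fu * f t₀ (u t₀)) / 2 := by
      rw [he]; field_simp
    simp only [mul_zero, add_zero, ne_eq, OfNat.ofNat_ne_zero, not_false_eq_true, zero_pow,
      neg_mul, neg_zero, Real.exp_zero, one_mul]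
    rw [hw1]
    linear_combination 2 * c₂ ^ 2 * h1
  -- O(1) bound on the third derivative
  have hDO3 : (fun h : ℝ => c₂ ^ 3 * deriv^[3] u (t₀ + c₂ * h)
      - u t₀ * (Real.exp (-e * (c₂ * h) ^ 2) *
          ((-2 * e * c₂ ^ 2 * h) * ((-2 * e * c₂ ^ 2) + (2 * e * c₂ ^ 2 * h) ^ 2)
            + 2 * (2 * e * c₂ ^ 2) ^ 2 * h)))
      =O[𝓝 (0:ℝ)] (fun h : ℝ => h ^ (0:ℕ)) := by
    have hco : ContinuousAt (fun h : ℝ => c₂ ^ 3 * deriv^[3] u (t₀ + c₂ * h)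
        - u t₀ * (Real.exp (-e * (c₂ * h) ^ 2) *
            ((-2 * e * c₂ ^ 2 * h) * ((-2 * e * c₂ ^ 2) + (2 * e * c₂ ^ 2 * h) ^ 2)
              + 2 * (2 * e * c₂ ^ 2) ^ 2 * h))) 0 :=
      ((hca 3 c₂).const_mul (c₂ ^ 3)).sub (Continuous.continuousAt (by fun_prop))
    have := hco.isBigO_one ℝ
    simpa [pow_zero] using this
  have hOD : (fun h : ℝ => u (t₀ + c₂ * h)
      - (u t₀ * Real.exp (-e * (c₂ * h) ^ 2) + h * c₂ * f t₀ (u t₀)))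
      =O[𝓝 (0:ℝ)] (fun h : ℝ => h ^ (3:ℕ)) :=
    bigO_step hDd0 hD0 (bigO_step hDd1 hD10 (bigO_step hDd2 hD20 hDO3))
  ----------------------------------------------------------------
  -- The ψ chain : ψ h = u(t₀+h) − u₀ − h(b₁k₁ + b₂u'(t₀+c₂h))
  ----------------------------------------------------------------
  have hψd0 : ∀ᶠ h in 𝓝 (0:ℝ), HasDerivAt
      (fun h : ℝ => u (t₀ + h) - u t₀
          - h * (b₁ * f t₀ (u t₀) + b₂ * deriv^[1] u (t₀ + c₂ * h)))
      (deriv^[1] u (t₀ + h)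
          - ((b₁ * f t₀ (u t₀) + b₂ * deriv^[1] u (t₀ + c₂ * h))
             + h * (b₂ * (c₂ * deriv^[2] u (t₀ + c₂ * h))))) h := by
    filter_upwards [hshift 0 1 1 rfl, hshift 1 2 c₂ rfl] with h ha hb
    simp only [one_mul] at ha
    exact ((ha.sub_const (u t₀)).sub
      ((hasDerivAt_id' h).mul
        ((hasDerivAt_const h (b₁ * f t₀ (u t₀))).add (hb.const_mul b₂)))).congr_d (by simp only [Pi.add_apply]; ring)
  have hψd1 : ∀ᶠ h in 𝓝 (0:ℝ), HasDerivAt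
      (fun h : ℝ => deriv^[1] u (t₀ + h)
          - ((b₁ * f t₀ (u t₀) + b₂ * deriv^[1] u (t₀ + c₂ * h))
             + h * (b₂ * (c₂ * deriv^[2] u (t₀ + c₂ * h)))))
      (deriv^[2] u (t₀ + h)
          - (2 * (b₂ * c₂) * deriv^[2] u (t₀ + c₂ * h)
             + h * (b₂ * (c₂ * (c₂ * deriv^[3] u (t₀ + c₂ * h)))))) h := by
    filter_upwards [hshift 1 2 1 rfl, hshift 1 2 c₂ rfl, hshift 2 3 c₂ rfl] with h ha hb hc
    simp only [one_mul] at ha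
    exact (ha.sub
      (((hasDerivAt_const h (b₁ * f t₀ (u t₀))).add (hb.const_mul b₂)).add
        ((hasDerivAt_id' h).mul ((hc.const_mul c₂).const_mul b₂)))).congr_d (by ring)
  have hψd2 : ∀ᶠ h in 𝓝 (0:ℝ), HasDerivAt
      (fun h : ℝ => deriv^[2] u (t₀ + h)
          - (2 * (b₂ * c₂) * deriv^[2] u (t₀ + c₂ * h)
             + h * (b₂ * (c₂ * (c₂ * deriv^[3] u (t₀ + c₂ * h))))))
      (deriv^[3] u (t₀ + h)
          - (3 * (b₂ * c₂ ^ 2) * deriv^[3] u (t₀ + c₂ * h)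
             + h * (b₂ * (c₂ * (c₂ * (c₂ * deriv^[4] u (t₀ + c₂ * h))))))) h := by
    filter_upwards [hshift 2 3 1 rfl, hshift 2 3 c₂ rfl, hshift 3 4 c₂ rfl] with h ha hb hc
    simp only [one_mul] at ha
    exact (ha.sub
      ((hb.const_mul (2 * (b₂ * c₂))).add
        ((hasDerivAt_id' h).mul (((hc.const_mul c₂).const_mul c₂).const_mul b₂)))).congr_d
      (by ring)
  have hψd3 : ∀ᶠ h in 𝓝 (0:ℝ), HasDerivAt
      (fun h : ℝ => deriv^[3] u (t₀ + h)
          - (3 * (b₂ * c₂ ^ 2) * deriv^[3] u (t₀ + c₂ * h)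
             + h * (b₂ * (c₂ * (c₂ * (c₂ * deriv^[4] u (t₀ + c₂ * h)))))))
      (deriv^[4] u (t₀ + h)
          - (4 * (b₂ * c₂ ^ 3) * deriv^[4] u (t₀ + c₂ * h)
             + h * (b₂ * (c₂ * (c₂ * (c₂ * (c₂ * deriv^[5] u (t₀ + c₂ * h)))))))) h := by
    filter_upwards [hshift 3 4 1 rfl, hshift 3 4 c₂ rfl, hshift 4 5 c₂ rfl] with h ha hb hc
    simp only [one_mul] at ha
    exact (ha.sub
      ((hb.const_mul (3 * (b₂ * c₂ ^ 2))).add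
        ((hasDerivAt_id' h).mul
          ((((hc.const_mul c₂).const_mul c₂).const_mul c₂).const_mul b₂)))).congr_d
      (by ring)
  have hψ0 : (fun h : ℝ => u (t₀ + h) - u t₀
      - h * (b₁ * f t₀ (u t₀) + b₂ * deriv^[1] u (t₀ + c₂ * h))) 0 = 0 := by
    simp
  have hψ10 : (fun h : ℝ => deriv^[1] u (t₀ + h)
      - ((b₁ * f t₀ (u t₀) + b₂ * deriv^[1] u (t₀ + c₂ * h))
         + h * (b₂ * (c₂ * deriv^[2] u (t₀ + c₂ * h))))) 0 = 0 := by
    simp only [mul_zero, add_zero, zero_mul, Function.iterate_one, hw0]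
    rw [hb₁, hb₂]; ring
  have hψ20 : (fun h : ℝ => deriv^[2] u (t₀ + h)
      - (2 * (b₂ * c₂) * deriv^[2] u (t₀ + c₂ * h)
         + h * (b₂ * (c₂ * (c₂ * deriv^[3] u (t₀ + c₂ * h)))))) 0 = 0 := by
    simp only [mul_zero, add_zero, zero_mul]
    rw [hb₂, hc₂]; ring
  have hψ30 : (fun h : ℝ => deriv^[3] u (t₀ + h)
      - (3 * (b₂ * c₂ ^ 2) * deriv^[3] u (t₀ + c₂ * h)
         + h * (b₂ * (c₂ * (c₂ * (c₂ * deriv^[4] u (t₀ + c₂ * h))))))) 0 = 0 := by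
    simp only [mul_zero, add_zero, zero_mul]
    rw [hb₂, hc₂]; ring
  have hψ4O : (fun h : ℝ => deriv^[4] u (t₀ + h)
      - (4 * (b₂ * c₂ ^ 3) * deriv^[4] u (t₀ + c₂ * h)
         + h * (b₂ * (c₂ * (c₂ * (c₂ * (c₂ * deriv^[5] u (t₀ + c₂ * h))))))))
      =O[𝓝 (0:ℝ)] (fun h : ℝ => h ^ (0:ℕ)) := by
    have hco : ContinuousAt (fun h : ℝ => deriv^[4] u (t₀ + h)
        - (4 * (b₂ * c₂ ^ 3) * deriv^[4] u (t₀ + c₂ * h)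
           + h * (b₂ * (c₂ * (c₂ * (c₂ * (c₂ * deriv^[5] u (t₀ + c₂ * h)))))))) 0 :=
      (hca1 4).sub (((hca 4 c₂).const_mul (4 * (b₂ * c₂ ^ 3))).add
        ((continuous_id'.continuousAt).mul
          ((((((hca 5 c₂).const_mul c₂).const_mul c₂).const_mul c₂).const_mul c₂).const_mul b₂)))
    have := hco.isBigO_one ℝ
    simpa [pow_zero] using this
  have hψO : (fun h : ℝ => u (t₀ + h) - u t₀
      - h * (b₁ * f t₀ (u t₀) + b₂ * deriv^[1] u (t₀ + c₂ * h)))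
      =O[𝓝 (0:ℝ)] (fun h : ℝ => h ^ (4:ℕ)) :=
    bigO_step hψd0 hψ0 (bigO_step hψd1 hψ10 (bigO_step hψd2 hψ20 (bigO_step hψd3 hψ30 hψ4O)))
  ----------------------------------------------------------------
  -- The Lipschitz comparison part R
  ----------------------------------------------------------------
  obtain ⟨K, tset, htset, hlip⟩ :=
    (hf.contDiffAt.of_le (by simp) :
      ContDiffAt ℝ 1 (fun p : ℝ × ℝ => f p.1 p.2) (t₀, u t₀)).exists_lipschitzOnWith
  have hTA : Tendsto (fun h : ℝ => t₀ + c₂ * h) (𝓝 0) (𝓝 t₀) := by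
    have hc : Continuous (fun h : ℝ => t₀ + c₂ * h) := by continuity
    simpa using hc.tendsto (0:ℝ)
  have hcurve1 : Tendsto (fun h : ℝ => ((t₀ + c₂ * h, u (t₀ + c₂ * h)) : ℝ × ℝ))
      (𝓝 0) (𝓝 (t₀, u t₀)) := by
    have h1 : ContinuousAt u t₀ := (hs t₀ hts).differentiableAt.continuousAt
    have hTB : Tendsto (fun h : ℝ => u (t₀ + c₂ * h)) (𝓝 0) (𝓝 (u t₀)) := by
      simpa [Function.comp_def] using Filter.Tendsto.comp (h1 : Tendsto _ _ _) hTA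
    exact hTA.prodMk_nhds hTB
  have hcurve2 : Tendsto (fun h : ℝ =>
      ((t₀ + c₂ * h, u t₀ * Real.exp (-e * (c₂ * h) ^ 2) + h * c₂ * f t₀ (u t₀)) : ℝ × ℝ))
      (𝓝 0) (𝓝 (t₀, u t₀)) := by
    have hy : Continuous (fun h : ℝ =>
        u t₀ * Real.exp (-e * (c₂ * h) ^ 2) + h * c₂ * f t₀ (u t₀)) := by fun_prop
    have hTy : Tendsto (fun h : ℝ =>
        u t₀ * Real.exp (-e * (c₂ * h) ^ 2) + h * c₂ * f t₀ (u t₀)) (𝓝 0) (𝓝 (u t₀)) := by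
      simpa using hy.tendsto (0:ℝ)
    exact hTA.prodMk_nhds hTy
  have hdiffO : (fun h : ℝ => deriv^[1] u (t₀ + c₂ * h)
      - f (t₀ + c₂ * h) (u t₀ * Real.exp (-e * (c₂ * h) ^ 2) + h * c₂ * f t₀ (u t₀)))
      =O[𝓝 (0:ℝ)] (fun h : ℝ => u (t₀ + c₂ * h)
        - (u t₀ * Real.exp (-e * (c₂ * h) ^ 2) + h * c₂ * f t₀ (u t₀))) := by
    rw [isBigO_iff]
    refine ⟨(K : ℝ), ?_⟩
    filter_upwards [hmem c₂, hcurve1.eventually_mem htset, hcurve2.eventually_mem htset]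
      with h h1 h2 h3
    have hde : deriv^[1] u (t₀ + c₂ * h) = f (t₀ + c₂ * h) (u (t₀ + c₂ * h)) := by
      rw [Function.iterate_one]
      exact (hs _ h1).deriv
    rw [hde]
    have hd := hlip.dist_le_mul _ h2 _ h3
    rw [Prod.dist_eq] at hd
    simp only [dist_self] at hd
    have hd2 : dist (f (t₀ + c₂ * h) (u (t₀ + c₂ * h)))
        (f (t₀ + c₂ * h) (u t₀ * Real.exp (-e * (c₂ * h) ^ 2) + h * c₂ * f t₀ (u t₀)))
        ≤ (K : ℝ) * dist (u (t₀ + c₂ * h))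
          (u t₀ * Real.exp (-e * (c₂ * h) ^ 2) + h * c₂ * f t₀ (u t₀)) := by
      calc dist _ _ ≤ (K : ℝ) * max 0 (dist (u (t₀ + c₂ * h))
            (u t₀ * Real.exp (-e * (c₂ * h) ^ 2) + h * c₂ * f t₀ (u t₀))) := hd
        _ = _ := by rw [max_eq_right dist_nonneg]
    rw [Real.norm_eq_abs, Real.norm_eq_abs, ← Real.dist_eq, ← Real.dist_eq]
    exact hd2
  have hRO : (fun h : ℝ => h * (b₂ * (deriv^[1] u (t₀ + c₂ * h)
      - f (t₀ + c₂ * h) (u t₀ * Real.exp (-e * (c₂ * h) ^ 2) + h * c₂ * f t₀ (u t₀)))))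
      =O[𝓝 (0:ℝ)] (fun h : ℝ => h ^ (4:ℕ)) := by
    have h1 := (isBigO_refl (fun h : ℝ => h) (𝓝 (0:ℝ))).mul
      ((hdiffO.trans hOD).const_mul_left b₂)
    refine h1.congr' EventuallyEq.rfl (Filter.Eventually.of_forall fun h => ?_)
    ring
  ----------------------------------------------------------------
  -- Assembly
  ----------------------------------------------------------------
  have hGO : (fun h : ℝ => u (t₀ + h) - u t₀
      - h * (b₁ * f t₀ (u t₀)
         + b₂ * f (t₀ + c₂ * h)
             (u t₀ * Real.exp (-e * (c₂ * h) ^ 2) + h * c₂ * f t₀ (u t₀))))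
      =O[𝓝 (0:ℝ)] (fun h : ℝ => h ^ (4:ℕ)) := by
    have hsum := hψO.add hRO
    refine hsum.congr' (Filter.Eventually.of_forall fun h => ?_) EventuallyEq.rfl
    simp only [Pi.add_apply]
    ring
  have hmul := (hGO.mono nhdsWithin_le_nhds).mul
    (isBigO_refl (fun h : ℝ => h⁻¹) (𝓝[≠] (0:ℝ)))
  refine hmul.congr' ?_ ?_
  · filter_upwards [eventually_mem_nhdsWithin] with h hh
    have h0 : h ≠ 0 := hh
    field_simp
    try ring
  · filter_upwards [eventually_mem_nhdsWithin] with h hh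
    have h0 : h ≠ 0 := hh
    show h ^ (4:ℕ) * h⁻¹ = h ^ 3
    rw [pow_succ, mul_assoc, mul_inv_cancel₀ h0, mul_one]
end

section
/- Let f : ℝ → ℝ → ℝ be C^∞ (jointly smooth), let t₀ ∈ ℝ, and let u be a solution of u'(t) = f(t, u(t)) on a neighborhood of t₀ with u₀ = u(t₀) ≠ 0. Take the coefficients a₂₁ = c₂ = 1/2, a₃₁ = −1, a₃₂ = 2, c₃ = 1, b₁ = 1/6, b₂ = 2/3, b₃ = 1/6, and the shape parameters e₂ = −u''(t₀)/(2u₀) = −(f_t + f_u·f)/(2u₀) and e₃ = −e₂, where f, f_t, f_u denote f and its partial derivatives at (t₀, u₀). Define τ(h) = (u(t₀+h) − u₀)/h − (b₁k₁ + b₂k₂ + b₃k₃), where k₁ = f(t₀, u₀), k₂ = f(t₀ + c₂h, u₀·exp(−e₂(c₂h)²) + h a₂₁ k₁), k₃ = f(t₀ + c₃h, u₀·exp(−e₃(c₃h)²) + h(a₃₁k₁ + a₃₂k₂)). Then τ(h) = O(h⁴) as h → 0; that is, this three-stage RBF Runge–Kutta method is fourth-order accurate. -/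
open Real Filter Asymptotics Topology
open scoped ContDiff

noncomputable def DD (F : ℝ × ℝ → ℝ) (v : ℝ × ℝ) : ℝ × ℝ → ℝ := fun p => fderiv ℝ F p v

lemma contDiff_DD {F : ℝ × ℝ → ℝ} (hF : ContDiff ℝ ∞ F) (v : ℝ × ℝ) :
    ContDiff ℝ ∞ (DD F v) := by
  have h1 : ContDiff ℝ ∞ (fderiv ℝ F) := hF.fderiv_right (m := ∞) (by norm_num)
  exact h1.clm_apply contDiff_const

lemma hasDerivAt_comp2 {F : ℝ × ℝ → ℝ} (hF : ContDiff ℝ ∞ F) {x y : ℝ → ℝ} {x' y' t : ℝ}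
    (hx : HasDerivAt x x' t) (hy : HasDerivAt y y' t) :
    HasDerivAt (fun s => F (x s, y s))
      (x' * DD F (1,0) (x t, y t) + y' * DD F (0,1) (x t, y t)) t := by
  have hFd : HasFDerivAt F (fderiv ℝ F (x t, y t)) (x t, y t) :=
    ((hF.differentiable (by norm_num)) (x t, y t)).hasFDerivAt
  have h := hFd.comp_hasDerivAt t (hx.prodMk hy)
  convert h using 1
  case e'_4 => rfl
  case e'_5 => rfl
  case e'_8 => rfl
  have hv : (x', y') = x' • ((1:ℝ),(0:ℝ)) + y' • ((0:ℝ),(1:ℝ)) := by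
    simp [Prod.ext_iff]
  rw [hv, map_add, map_smul, map_smul]
  simp [DD, smul_eq_mul]

lemma differentiableAt_comp2 {F : ℝ × ℝ → ℝ} (hF : ContDiff ℝ ∞ F) {x y : ℝ → ℝ} {t : ℝ}
    (hx : DifferentiableAt ℝ x t) (hy : DifferentiableAt ℝ y t) :
    DifferentiableAt ℝ (fun s => F (x s, y s)) t := by
  rcases hx.hasDerivAt with hx'
  rcases hy.hasDerivAt with hy'
  exact (hasDerivAt_comp2 hF hx' hy').differentiableAt

lemma DD_comm {F : ℝ × ℝ → ℝ} (hF : ContDiff ℝ ∞ F) (v w p : ℝ × ℝ) :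
    DD (DD F v) w p = DD (DD F w) v p := by
  have hd : DifferentiableAt ℝ (fderiv ℝ F) p :=
    ((hF.fderiv_right (m := ∞) (by norm_num)).differentiable (by norm_num)) p
  have e : ∀ a b : ℝ × ℝ, DD (DD F a) b p = fderiv ℝ (fderiv ℝ F) p b a := by
    intro a b
    have h1 : fderiv ℝ (fun q => fderiv ℝ F q a) p
        = (fderiv ℝ F p).comp (fderiv ℝ (fun _ => a) p) + (fderiv ℝ (fderiv ℝ F) p).flip a :=
      fderiv_clm_apply hd (differentiableAt_const a)
    have h2 : DD (DD F a) b p = fderiv ℝ (fun q => fderiv ℝ F q a) p b := rfl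
    rw [h2, h1]
    simp
  rw [e, e]
  exact (hF.contDiffAt.isSymmSndFDerivAt (by
    rw [minSmoothness_of_isRCLikeNormedField]
    rw [show ((2:WithTop ℕ∞)) = ((2:ℕ∞) : WithTop ℕ∞) from rfl]
    exact WithTop.coe_le_coe.2 le_top)) w v

lemma DD_swap {F : ℝ × ℝ → ℝ} (hF : ContDiff ℝ ∞ F) (v w : ℝ × ℝ) :
    DD (DD F v) w = DD (DD F w) v := funext fun p => DD_comm hF v w p

lemma HasDerivAt.fix {f : ℝ → ℝ} {a b x : ℝ} (h : HasDerivAt f a x) (e : a = b) :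
    HasDerivAt f b x := e ▸ h

lemma isBigO_pow_succ_of_hasDerivAt {φ ψ : ℝ → ℝ} {n : ℕ}
    (hd : ∀ᶠ t in 𝓝 (0:ℝ), HasDerivAt φ (ψ t) t) (h0 : φ 0 = 0)
    (hψ : ψ =O[𝓝 (0:ℝ)] fun t => t ^ n) :
    φ =O[𝓝 (0:ℝ)] fun t => t ^ (n + 1) := by
  rcases hψ.bound with ⟨c, hc⟩
  rcases Metric.eventually_nhds_iff.1 (hd.and hc) with ⟨δ, hδpos, hδ⟩
  rw [isBigO_iff]
  refine ⟨|c|, Metric.eventually_nhds_iff.2 ⟨δ, hδpos, fun {t} ht => ?_⟩⟩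
  have hsub : Set.uIcc (0:ℝ) t ⊆ Metric.ball (0:ℝ) δ := by
    intro x hx
    have h1 : |x| ≤ |t| := by
      rcases Set.mem_uIcc.1 hx with ⟨h1, h2⟩ | ⟨h1, h2⟩ <;> rw [abs_le] <;>
        constructor <;> nlinarith [neg_abs_le t, le_abs_self t]
    simp only [Metric.mem_ball, Real.dist_eq, sub_zero] at ht ⊢
    exact lt_of_le_of_lt h1 ht
  have key : ‖φ t - φ 0‖ ≤ |c| * |t| ^ n * ‖t - 0‖ := by
    apply Convex.norm_image_sub_le_of_norm_hasDerivWithin_le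
      (f' := ψ) (fun x hx => ((hδ (hsub hx)).1).hasDerivWithinAt)
      (fun x hx => ?_) (convex_uIcc 0 t) (Set.left_mem_uIcc) (Set.right_mem_uIcc)
    have hb := (hδ (hsub hx)).2
    have h1 : |x| ≤ |t| := by
      rcases Set.mem_uIcc.1 hx with ⟨h1, h2⟩ | ⟨h1, h2⟩ <;> rw [abs_le] <;>
        constructor <;> nlinarith [neg_abs_le t, le_abs_self t]
    calc ‖ψ x‖ ≤ c * ‖x ^ n‖ := hb
    _ ≤ |c| * ‖x ^ n‖ := by
        apply mul_le_mul_of_nonneg_right (le_abs_self c) (norm_nonneg _)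
    _ ≤ |c| * |t| ^ n := by
        apply mul_le_mul_of_nonneg_left _ (abs_nonneg c)
        rw [norm_pow]
        exact pow_le_pow_left₀ (abs_nonneg x) h1 n
  rw [h0, sub_zero] at key
  calc ‖φ t‖ ≤ |c| * |t| ^ n * ‖t - 0‖ := key
  _ = |c| * ‖t ^ (n+1)‖ := by
      rw [sub_zero]
      simp [abs_pow, pow_succ, Real.norm_eq_abs, mul_assoc]
  _ ≤ |c| * ‖t ^ (n+1)‖ := le_rfl

lemma isBigO_pow_one_of_differentiableAt {φ : ℝ → ℝ}
    (hφ : DifferentiableAt ℝ φ 0) (h0 : φ 0 = 0) :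
    φ =O[𝓝 (0:ℝ)] fun t => t ^ 1 := by
  have h := hφ.isBigO_sub
  refine h.congr (fun x => by rw [h0, sub_zero]) (fun x => by rw [sub_zero, pow_one])


section Stage
variable (F : ℝ × ℝ → ℝ) (t₀ u₀ e₂ e₃ k : ℝ)

noncomputable def E2v : ℝ → ℝ := fun h => Real.exp (-e₂ * (1/2*h)^2)
noncomputable def w2v : ℝ → ℝ := fun h => -(e₂/2)*h
noncomputable def y2v : ℝ → ℝ := fun h => u₀ * E2v e₂ h + h * (1/2*k)
noncomputable def y2dv : ℝ → ℝ := fun h => u₀ * (E2v e₂ h * w2v e₂ h) + 1/2*k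
noncomputable def y2ddv : ℝ → ℝ := fun h =>
  u₀ * (E2v e₂ h * w2v e₂ h * w2v e₂ h + E2v e₂ h * -(e₂/2))
noncomputable def y2dddv : ℝ → ℝ := fun h =>
  u₀ * (E2v e₂ h * w2v e₂ h * w2v e₂ h * w2v e₂ h + 3*(E2v e₂ h * w2v e₂ h) * -(e₂/2))
noncomputable def P2 : ℝ → ℝ × ℝ := fun h => (t₀ + 1/2*h, y2v u₀ e₂ k h)
noncomputable def g2v : ℝ → ℝ := fun h => F (P2 t₀ u₀ e₂ k h)
noncomputable def g2dv : ℝ → ℝ := fun h =>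
  1/2 * DD F (1,0) (P2 t₀ u₀ e₂ k h) + y2dv u₀ e₂ k h * DD F (0,1) (P2 t₀ u₀ e₂ k h)
noncomputable def g2ddv : ℝ → ℝ := fun h =>
  1/2 * (1/2 * DD (DD F (1,0)) (1,0) (P2 t₀ u₀ e₂ k h)
        + y2dv u₀ e₂ k h * DD (DD F (1,0)) (0,1) (P2 t₀ u₀ e₂ k h))
  + (y2ddv u₀ e₂ h * DD F (0,1) (P2 t₀ u₀ e₂ k h)
     + y2dv u₀ e₂ k h * (1/2 * DD (DD F (1,0)) (0,1) (P2 t₀ u₀ e₂ k h)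
        + y2dv u₀ e₂ k h * DD (DD F (0,1)) (0,1) (P2 t₀ u₀ e₂ k h)))
noncomputable def g2dddv : ℝ → ℝ := fun h =>
  1/2 * (1/2 * (1/2 * DD (DD (DD F (1,0)) (1,0)) (1,0) (P2 t₀ u₀ e₂ k h)
               + y2dv u₀ e₂ k h * DD (DD (DD F (1,0)) (1,0)) (0,1) (P2 t₀ u₀ e₂ k h))
        + (y2ddv u₀ e₂ h * DD (DD F (1,0)) (0,1) (P2 t₀ u₀ e₂ k h)
           + y2dv u₀ e₂ k h * (1/2 * DD (DD (DD F (1,0)) (1,0)) (0,1) (P2 t₀ u₀ e₂ k h)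
              + y2dv u₀ e₂ k h * DD (DD (DD F (1,0)) (0,1)) (0,1) (P2 t₀ u₀ e₂ k h))))
  + (y2dddv u₀ e₂ h * DD F (0,1) (P2 t₀ u₀ e₂ k h)
     + y2ddv u₀ e₂ h * (1/2 * DD (DD F (1,0)) (0,1) (P2 t₀ u₀ e₂ k h)
        + y2dv u₀ e₂ k h * DD (DD F (0,1)) (0,1) (P2 t₀ u₀ e₂ k h))
     + (y2ddv u₀ e₂ h * (1/2 * DD (DD F (1,0)) (0,1) (P2 t₀ u₀ e₂ k h)
          + y2dv u₀ e₂ k h * DD (DD F (0,1)) (0,1) (P2 t₀ u₀ e₂ k h))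
        + y2dv u₀ e₂ k h * (1/2 * (1/2 * DD (DD (DD F (1,0)) (1,0)) (0,1) (P2 t₀ u₀ e₂ k h)
              + y2dv u₀ e₂ k h * DD (DD (DD F (1,0)) (0,1)) (0,1) (P2 t₀ u₀ e₂ k h))
           + (y2ddv u₀ e₂ h * DD (DD F (0,1)) (0,1) (P2 t₀ u₀ e₂ k h)
              + y2dv u₀ e₂ k h * (1/2 * DD (DD (DD F (1,0)) (0,1)) (0,1) (P2 t₀ u₀ e₂ k h)
                 + y2dv u₀ e₂ k h * DD (DD (DD F (0,1)) (0,1)) (0,1) (P2 t₀ u₀ e₂ k h))))))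

noncomputable def E3v : ℝ → ℝ := fun h => Real.exp (-e₃ * (1*h)^2)
noncomputable def w3v : ℝ → ℝ := fun h => -(2*e₃)*h
noncomputable def s3v : ℝ → ℝ := fun h => -1*k + 2*g2v F t₀ u₀ e₂ k h
noncomputable def s3dv : ℝ → ℝ := fun h => 2*g2dv F t₀ u₀ e₂ k h
noncomputable def s3ddv : ℝ → ℝ := fun h => 2*g2ddv F t₀ u₀ e₂ k h
noncomputable def s3dddv : ℝ → ℝ := fun h => 2*g2dddv F t₀ u₀ e₂ k h
noncomputable def y3v : ℝ → ℝ := fun h => u₀ * E3v e₃ h + h * s3v F t₀ u₀ e₂ k h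
noncomputable def y3dv : ℝ → ℝ := fun h =>
  u₀ * (E3v e₃ h * w3v e₃ h) + (s3v F t₀ u₀ e₂ k h + h * s3dv F t₀ u₀ e₂ k h)
noncomputable def y3ddv : ℝ → ℝ := fun h =>
  u₀ * (E3v e₃ h * w3v e₃ h * w3v e₃ h + E3v e₃ h * -(2*e₃))
  + (2 * s3dv F t₀ u₀ e₂ k h + h * s3ddv F t₀ u₀ e₂ k h)
noncomputable def y3dddv : ℝ → ℝ := fun h =>
  u₀ * (E3v e₃ h * w3v e₃ h * w3v e₃ h * w3v e₃ h + 3*(E3v e₃ h * w3v e₃ h) * -(2*e₃))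
  + (3 * s3ddv F t₀ u₀ e₂ k h + h * s3dddv F t₀ u₀ e₂ k h)
noncomputable def P3 : ℝ → ℝ × ℝ := fun h => (t₀ + 1*h, y3v F t₀ u₀ e₂ e₃ k h)
noncomputable def g3v : ℝ → ℝ := fun h => F (P3 F t₀ u₀ e₂ e₃ k h)
noncomputable def g3dv : ℝ → ℝ := fun h =>
  1 * DD F (1,0) (P3 F t₀ u₀ e₂ e₃ k h)
  + y3dv F t₀ u₀ e₂ e₃ k h * DD F (0,1) (P3 F t₀ u₀ e₂ e₃ k h)
noncomputable def g3ddv : ℝ → ℝ := fun h =>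
  1 * (1 * DD (DD F (1,0)) (1,0) (P3 F t₀ u₀ e₂ e₃ k h)
      + y3dv F t₀ u₀ e₂ e₃ k h * DD (DD F (1,0)) (0,1) (P3 F t₀ u₀ e₂ e₃ k h))
  + (y3ddv F t₀ u₀ e₂ e₃ k h * DD F (0,1) (P3 F t₀ u₀ e₂ e₃ k h)
     + y3dv F t₀ u₀ e₂ e₃ k h * (1 * DD (DD F (1,0)) (0,1) (P3 F t₀ u₀ e₂ e₃ k h)
        + y3dv F t₀ u₀ e₂ e₃ k h * DD (DD F (0,1)) (0,1) (P3 F t₀ u₀ e₂ e₃ k h)))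
noncomputable def g3dddv : ℝ → ℝ := fun h =>
  1 * (1 * (1 * DD (DD (DD F (1,0)) (1,0)) (1,0) (P3 F t₀ u₀ e₂ e₃ k h)
           + y3dv F t₀ u₀ e₂ e₃ k h * DD (DD (DD F (1,0)) (1,0)) (0,1) (P3 F t₀ u₀ e₂ e₃ k h))
      + (y3ddv F t₀ u₀ e₂ e₃ k h * DD (DD F (1,0)) (0,1) (P3 F t₀ u₀ e₂ e₃ k h)
         + y3dv F t₀ u₀ e₂ e₃ k h * (1 * DD (DD (DD F (1,0)) (1,0)) (0,1) (P3 F t₀ u₀ e₂ e₃ k h)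
            + y3dv F t₀ u₀ e₂ e₃ k h * DD (DD (DD F (1,0)) (0,1)) (0,1) (P3 F t₀ u₀ e₂ e₃ k h))))
  + (y3dddv F t₀ u₀ e₂ e₃ k h * DD F (0,1) (P3 F t₀ u₀ e₂ e₃ k h)
     + y3ddv F t₀ u₀ e₂ e₃ k h * (1 * DD (DD F (1,0)) (0,1) (P3 F t₀ u₀ e₂ e₃ k h)
        + y3dv F t₀ u₀ e₂ e₃ k h * DD (DD F (0,1)) (0,1) (P3 F t₀ u₀ e₂ e₃ k h))
     + (y3ddv F t₀ u₀ e₂ e₃ k h * (1 * DD (DD F (1,0)) (0,1) (P3 F t₀ u₀ e₂ e₃ k h)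
          + y3dv F t₀ u₀ e₂ e₃ k h * DD (DD F (0,1)) (0,1) (P3 F t₀ u₀ e₂ e₃ k h))
        + y3dv F t₀ u₀ e₂ e₃ k h * (1 * (1 * DD (DD (DD F (1,0)) (1,0)) (0,1) (P3 F t₀ u₀ e₂ e₃ k h)
              + y3dv F t₀ u₀ e₂ e₃ k h * DD (DD (DD F (1,0)) (0,1)) (0,1) (P3 F t₀ u₀ e₂ e₃ k h))
           + (y3ddv F t₀ u₀ e₂ e₃ k h * DD (DD F (0,1)) (0,1) (P3 F t₀ u₀ e₂ e₃ k h)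
              + y3dv F t₀ u₀ e₂ e₃ k h * (1 * DD (DD (DD F (1,0)) (0,1)) (0,1) (P3 F t₀ u₀ e₂ e₃ k h)
                 + y3dv F t₀ u₀ e₂ e₃ k h * DD (DD (DD F (0,1)) (0,1)) (0,1) (P3 F t₀ u₀ e₂ e₃ k h))))))

noncomputable def Phiv : ℝ → ℝ := fun h =>
  1/6*k + 2/3 * g2v F t₀ u₀ e₂ k h + 1/6 * g3v F t₀ u₀ e₂ e₃ k h
noncomputable def Phidv : ℝ → ℝ := fun h =>
  2/3 * g2dv F t₀ u₀ e₂ k h + 1/6 * g3dv F t₀ u₀ e₂ e₃ k h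
noncomputable def Phiddv : ℝ → ℝ := fun h =>
  2/3 * g2ddv F t₀ u₀ e₂ k h + 1/6 * g3ddv F t₀ u₀ e₂ e₃ k h
noncomputable def Phidddv : ℝ → ℝ := fun h =>
  2/3 * g2dddv F t₀ u₀ e₂ k h + 1/6 * g3dddv F t₀ u₀ e₂ e₃ k h

end Stage

section Deriv
variable {F : ℝ × ℝ → ℝ} (hF : ContDiff ℝ ∞ F) (t₀ u₀ e₂ e₃ k : ℝ)

lemma hE2 : ∀ h, HasDerivAt (E2v e₂) (E2v e₂ h * w2v e₂ h) h := by
  intro h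
  have h1 : HasDerivAt (fun h : ℝ => -e₂ * (1/2*h)^2) (w2v e₂ h) h := by
    have := (((hasDerivAt_id h).const_mul (1/2)).pow 2).const_mul (-e₂)
    exact this.fix (by simp only [w2v, id_eq]; ring)
  exact h1.exp.fix (by simp [E2v])

lemma hw2 : ∀ h, HasDerivAt (w2v e₂) (-(e₂/2)) h := by
  intro h
  exact ((hasDerivAt_id h).const_mul (-(e₂/2))).fix (by norm_num)

lemma hy2 : ∀ h, HasDerivAt (y2v u₀ e₂ k) (y2dv u₀ e₂ k h) h := by
  intro h
  have := ((hE2 e₂ h).const_mul u₀).add ((hasDerivAt_id h).mul_const (1/2*k))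
  exact this.fix (by simp only [y2dv, id_eq]; ring)

lemma hy2d : ∀ h, HasDerivAt (y2dv u₀ e₂ k) (y2ddv u₀ e₂ h) h := by
  intro h
  have := ((((hE2 e₂ h).mul (hw2 e₂ h))).const_mul u₀).add_const (1/2*k)
  exact this.fix (by simp only [y2ddv, id_eq]; try ring)

lemma hy2dd : ∀ h, HasDerivAt (y2ddv u₀ e₂) (y2dddv u₀ e₂ h) h := by
  intro h
  have := ((((hE2 e₂ h).mul (hw2 e₂ h)).mul (hw2 e₂ h)).add
    ((hE2 e₂ h).mul_const (-(e₂/2)))).const_mul u₀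
  exact this.fix (by simp only [y2dddv, id_eq, Pi.mul_apply]; try ring)

lemma hx2 : ∀ h : ℝ, HasDerivAt (fun s : ℝ => t₀ + 1/2*s) (1/2) h := by
  intro h
  exact (((hasDerivAt_id h).const_mul (1/2)).const_add t₀).fix (by ring)

include hF

lemma hg2 : ∀ h, HasDerivAt (g2v F t₀ u₀ e₂ k) (g2dv F t₀ u₀ e₂ k h) h := by
  intro h
  exact (hasDerivAt_comp2 hF (hx2 t₀ h) (hy2 u₀ e₂ k h)).fix (by simp [g2dv, P2])

lemma hg2d : ∀ h, HasDerivAt (g2dv F t₀ u₀ e₂ k) (g2ddv F t₀ u₀ e₂ k h) h := by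
  intro h
  have h1 := (hasDerivAt_comp2 (contDiff_DD hF (1,0)) (hx2 t₀ h) (hy2 u₀ e₂ k h)).const_mul (1/2)
  have h2 := (hy2d u₀ e₂ k h).mul (hasDerivAt_comp2 (contDiff_DD hF (0,1)) (hx2 t₀ h) (hy2 u₀ e₂ k h))
  refine (h1.add h2).fix ?_
  simp only [g2ddv, P2]
  rw [DD_swap hF (0,1) (1,0)]
  try ring

lemma hg2dd : ∀ h, HasDerivAt (g2ddv F t₀ u₀ e₂ k) (g2dddv F t₀ u₀ e₂ k h) h := by
  intro h
  have c20 := hasDerivAt_comp2 (contDiff_DD (contDiff_DD hF (1,0)) (1,0)) (hx2 t₀ h) (hy2 u₀ e₂ k h)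
  have c11 := hasDerivAt_comp2 (contDiff_DD (contDiff_DD hF (1,0)) (0,1)) (hx2 t₀ h) (hy2 u₀ e₂ k h)
  have c02 := hasDerivAt_comp2 (contDiff_DD (contDiff_DD hF (0,1)) (0,1)) (hx2 t₀ h) (hy2 u₀ e₂ k h)
  have c1 := hasDerivAt_comp2 (contDiff_DD hF (0,1)) (hx2 t₀ h) (hy2 u₀ e₂ k h)
  have hA := ((c20.const_mul (1/2)).add ((hy2d u₀ e₂ k h).mul c11)).const_mul (1/2)
  have hB := ((hy2dd u₀ e₂ h).mul c1).add
    (((hy2d u₀ e₂ k h).mul ((c11.const_mul (1/2)).add ((hy2d u₀ e₂ k h).mul c02))))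
  refine (hA.add hB).fix ?_
  simp only [g2dddv, P2, Pi.mul_apply, Pi.add_apply]
  rw [DD_swap (contDiff_DD hF (1,0)) (0,1) (1,0)]
  rw [show DD (DD (DD F (0,1)) (0,1)) (1,0) = DD (DD (DD F (1,0)) (0,1)) (0,1) by
    rw [DD_swap (contDiff_DD hF (0,1)) (0,1) (1,0), DD_swap hF (0,1) (1,0)]]
  rw [DD_swap hF (0,1) (1,0)]
  try ring

end Deriv

noncomputable def v1f (F : ℝ × ℝ → ℝ) (u : ℝ → ℝ) : ℝ → ℝ := fun t => F (t, u t)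
noncomputable def v2f (F : ℝ × ℝ → ℝ) (u : ℝ → ℝ) : ℝ → ℝ := fun t =>
  1 * DD F (1,0) (t, u t) + v1f F u t * DD F (0,1) (t, u t)
noncomputable def v3f (F : ℝ × ℝ → ℝ) (u : ℝ → ℝ) : ℝ → ℝ := fun t =>
  1 * (1 * DD (DD F (1,0)) (1,0) (t, u t) + v1f F u t * DD (DD F (1,0)) (0,1) (t, u t))
  + (v2f F u t * DD F (0,1) (t, u t)
     + v1f F u t * (1 * DD (DD F (1,0)) (0,1) (t, u t)
        + v1f F u t * DD (DD F (0,1)) (0,1) (t, u t)))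
noncomputable def v4f (F : ℝ × ℝ → ℝ) (u : ℝ → ℝ) : ℝ → ℝ := fun t =>
  1 * (1 * (1 * DD (DD (DD F (1,0)) (1,0)) (1,0) (t, u t)
           + v1f F u t * DD (DD (DD F (1,0)) (1,0)) (0,1) (t, u t))
      + (v2f F u t * DD (DD F (1,0)) (0,1) (t, u t)
         + v1f F u t * (1 * DD (DD (DD F (1,0)) (1,0)) (0,1) (t, u t)
            + v1f F u t * DD (DD (DD F (1,0)) (0,1)) (0,1) (t, u t))))
  + (v3f F u t * DD F (0,1) (t, u t)
     + v2f F u t * (1 * DD (DD F (1,0)) (0,1) (t, u t)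
        + v1f F u t * DD (DD F (0,1)) (0,1) (t, u t))
     + (v2f F u t * (1 * DD (DD F (1,0)) (0,1) (t, u t)
          + v1f F u t * DD (DD F (0,1)) (0,1) (t, u t))
        + v1f F u t * (1 * (1 * DD (DD (DD F (1,0)) (1,0)) (0,1) (t, u t)
              + v1f F u t * DD (DD (DD F (1,0)) (0,1)) (0,1) (t, u t))
           + (v2f F u t * DD (DD F (0,1)) (0,1) (t, u t)
              + v1f F u t * (1 * DD (DD (DD F (1,0)) (0,1)) (0,1) (t, u t)
                 + v1f F u t * DD (DD (DD F (0,1)) (0,1)) (0,1) (t, u t))))))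

noncomputable def W1 (F : ℝ × ℝ → ℝ) (t₀ u₀ : ℝ) : ℝ := F (t₀, u₀)
noncomputable def W2 (F : ℝ × ℝ → ℝ) (t₀ u₀ : ℝ) : ℝ :=
  1 * DD F (1,0) (t₀, u₀) + W1 F t₀ u₀ * DD F (0,1) (t₀, u₀)
noncomputable def W3 (F : ℝ × ℝ → ℝ) (t₀ u₀ : ℝ) : ℝ :=
  1 * (1 * DD (DD F (1,0)) (1,0) (t₀, u₀) + W1 F t₀ u₀ * DD (DD F (1,0)) (0,1) (t₀, u₀))
  + (W2 F t₀ u₀ * DD F (0,1) (t₀, u₀)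
     + W1 F t₀ u₀ * (1 * DD (DD F (1,0)) (0,1) (t₀, u₀)
        + W1 F t₀ u₀ * DD (DD F (0,1)) (0,1) (t₀, u₀)))
noncomputable def W4 (F : ℝ × ℝ → ℝ) (t₀ u₀ : ℝ) : ℝ :=
  1 * (1 * (1 * DD (DD (DD F (1,0)) (1,0)) (1,0) (t₀, u₀)
           + W1 F t₀ u₀ * DD (DD (DD F (1,0)) (1,0)) (0,1) (t₀, u₀))
      + (W2 F t₀ u₀ * DD (DD F (1,0)) (0,1) (t₀, u₀)
         + W1 F t₀ u₀ * (1 * DD (DD (DD F (1,0)) (1,0)) (0,1) (t₀, u₀)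
            + W1 F t₀ u₀ * DD (DD (DD F (1,0)) (0,1)) (0,1) (t₀, u₀))))
  + (W3 F t₀ u₀ * DD F (0,1) (t₀, u₀)
     + W2 F t₀ u₀ * (1 * DD (DD F (1,0)) (0,1) (t₀, u₀)
        + W1 F t₀ u₀ * DD (DD F (0,1)) (0,1) (t₀, u₀))
     + (W2 F t₀ u₀ * (1 * DD (DD F (1,0)) (0,1) (t₀, u₀)
          + W1 F t₀ u₀ * DD (DD F (0,1)) (0,1) (t₀, u₀))
        + W1 F t₀ u₀ * (1 * (1 * DD (DD (DD F (1,0)) (1,0)) (0,1) (t₀, u₀)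
              + W1 F t₀ u₀ * DD (DD (DD F (1,0)) (0,1)) (0,1) (t₀, u₀))
           + (W2 F t₀ u₀ * DD (DD F (0,1)) (0,1) (t₀, u₀)
              + W1 F t₀ u₀ * (1 * DD (DD (DD F (1,0)) (0,1)) (0,1) (t₀, u₀)
                 + W1 F t₀ u₀ * DD (DD (DD F (0,1)) (0,1)) (0,1) (t₀, u₀))))))

section Deriv2
variable {F : ℝ × ℝ → ℝ} (hF : ContDiff ℝ ∞ F) (t₀ u₀ e₂ e₃ k : ℝ)

lemma hE3 : ∀ h, HasDerivAt (E3v e₃) (E3v e₃ h * w3v e₃ h) h := by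
  intro h
  have h1 : HasDerivAt (fun h : ℝ => -e₃ * (1*h)^2) (w3v e₃ h) h := by
    have := (((hasDerivAt_id h).const_mul 1).pow 2).const_mul (-e₃)
    exact this.fix (by simp only [w3v, id_eq]; ring)
  exact h1.exp.fix (by simp [E3v])

lemma hw3 : ∀ h, HasDerivAt (w3v e₃) (-(2*e₃)) h := by
  intro h
  exact ((hasDerivAt_id h).const_mul (-(2*e₃))).fix (by norm_num)

include hF

lemma hs3 : ∀ h, HasDerivAt (s3v F t₀ u₀ e₂ k) (s3dv F t₀ u₀ e₂ k h) h := by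
  intro h
  exact (((hg2 hF t₀ u₀ e₂ k h).const_mul 2).const_add (-1*k)).fix (by simp only [s3dv])

lemma hs3d : ∀ h, HasDerivAt (s3dv F t₀ u₀ e₂ k) (s3ddv F t₀ u₀ e₂ k h) h := by
  intro h
  exact ((hg2d hF t₀ u₀ e₂ k h).const_mul 2).fix (by simp only [s3ddv])

lemma hs3dd : ∀ h, HasDerivAt (s3ddv F t₀ u₀ e₂ k) (s3dddv F t₀ u₀ e₂ k h) h := by
  intro h
  exact ((hg2dd hF t₀ u₀ e₂ k h).const_mul 2).fix (by simp only [s3dddv])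

lemma hy3 : ∀ h, HasDerivAt (y3v F t₀ u₀ e₂ e₃ k) (y3dv F t₀ u₀ e₂ e₃ k h) h := by
  intro h
  have := ((hE3 e₃ h).const_mul u₀).add ((hasDerivAt_id h).mul (hs3 hF t₀ u₀ e₂ k h))
  exact this.fix (by simp only [y3dv, id_eq]; ring)

lemma hy3d : ∀ h, HasDerivAt (y3dv F t₀ u₀ e₂ e₃ k) (y3ddv F t₀ u₀ e₂ e₃ k h) h := by
  intro h
  have := (((hE3 e₃ h).mul (hw3 e₃ h)).const_mul u₀).add
    ((hs3 hF t₀ u₀ e₂ k h).add ((hasDerivAt_id h).mul (hs3d hF t₀ u₀ e₂ k h)))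
  exact this.fix (by simp only [y3ddv, id_eq]; ring)

lemma hy3dd : ∀ h, HasDerivAt (y3ddv F t₀ u₀ e₂ e₃ k) (y3dddv F t₀ u₀ e₂ e₃ k h) h := by
  intro h
  have := (((((hE3 e₃ h).mul (hw3 e₃ h)).mul (hw3 e₃ h)).add
      ((hE3 e₃ h).mul_const (-(2*e₃)))).const_mul u₀).add
    (((hs3d hF t₀ u₀ e₂ k h).const_mul 2).add
      ((hasDerivAt_id h).mul (hs3dd hF t₀ u₀ e₂ k h)))
  exact this.fix (by simp only [y3dddv, id_eq, Pi.mul_apply]; ring)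

omit hF in
lemma hx3 : ∀ h : ℝ, HasDerivAt (fun s : ℝ => t₀ + 1*s) 1 h := by
  intro h
  exact (((hasDerivAt_id h).const_mul 1).const_add t₀).fix (by ring)

lemma hg3 : ∀ h, HasDerivAt (g3v F t₀ u₀ e₂ e₃ k) (g3dv F t₀ u₀ e₂ e₃ k h) h := by
  intro h
  exact (hasDerivAt_comp2 hF (hx3 t₀ h) (hy3 hF t₀ u₀ e₂ e₃ k h)).fix
    (by simp only [g3dv, P3])

lemma hg3d : ∀ h, HasDerivAt (g3dv F t₀ u₀ e₂ e₃ k) (g3ddv F t₀ u₀ e₂ e₃ k h) h := by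
  intro h
  have h1 := (hasDerivAt_comp2 (contDiff_DD hF (1,0)) (hx3 t₀ h)
    (hy3 hF t₀ u₀ e₂ e₃ k h)).const_mul 1
  have h2 := (hy3d hF t₀ u₀ e₂ e₃ k h).mul
    (hasDerivAt_comp2 (contDiff_DD hF (0,1)) (hx3 t₀ h) (hy3 hF t₀ u₀ e₂ e₃ k h))
  refine (h1.add h2).fix ?_
  simp only [g3ddv, P3]
  rw [DD_swap hF (0,1) (1,0)]
  try ring

lemma hg3dd : ∀ h, HasDerivAt (g3ddv F t₀ u₀ e₂ e₃ k) (g3dddv F t₀ u₀ e₂ e₃ k h) h := by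
  intro h
  have c20 := hasDerivAt_comp2 (contDiff_DD (contDiff_DD hF (1,0)) (1,0)) (hx3 t₀ h)
    (hy3 hF t₀ u₀ e₂ e₃ k h)
  have c11 := hasDerivAt_comp2 (contDiff_DD (contDiff_DD hF (1,0)) (0,1)) (hx3 t₀ h)
    (hy3 hF t₀ u₀ e₂ e₃ k h)
  have c02 := hasDerivAt_comp2 (contDiff_DD (contDiff_DD hF (0,1)) (0,1)) (hx3 t₀ h)
    (hy3 hF t₀ u₀ e₂ e₃ k h)
  have c1 := hasDerivAt_comp2 (contDiff_DD hF (0,1)) (hx3 t₀ h) (hy3 hF t₀ u₀ e₂ e₃ k h)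
  have hA := ((c20.const_mul 1).add ((hy3d hF t₀ u₀ e₂ e₃ k h).mul c11)).const_mul 1
  have hB := ((hy3dd hF t₀ u₀ e₂ e₃ k h).mul c1).add
    (((hy3d hF t₀ u₀ e₂ e₃ k h).mul ((c11.const_mul 1).add
      ((hy3d hF t₀ u₀ e₂ e₃ k h).mul c02))))
  refine (hA.add hB).fix ?_
  simp only [g3dddv, P3, Pi.mul_apply, Pi.add_apply]
  rw [DD_swap (contDiff_DD hF (1,0)) (0,1) (1,0)]
  rw [show DD (DD (DD F (0,1)) (0,1)) (1,0) = DD (DD (DD F (1,0)) (0,1)) (0,1) by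
    rw [DD_swap (contDiff_DD hF (0,1)) (0,1) (1,0), DD_swap hF (0,1) (1,0)]]
  rw [DD_swap hF (0,1) (1,0)]
  try ring

lemma hPhi : ∀ h, HasDerivAt (Phiv F t₀ u₀ e₂ e₃ k) (Phidv F t₀ u₀ e₂ e₃ k h) h := by
  intro h
  have := ((hasDerivAt_const h (1/6*k)).add ((hg2 hF t₀ u₀ e₂ k h).const_mul (2/3))).add
    ((hg3 hF t₀ u₀ e₂ e₃ k h).const_mul (1/6))
  exact this.fix (by simp only [Phidv]; ring)

lemma hPhid : ∀ h, HasDerivAt (Phidv F t₀ u₀ e₂ e₃ k) (Phiddv F t₀ u₀ e₂ e₃ k h) h := by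
  intro h
  have := ((hg2d hF t₀ u₀ e₂ k h).const_mul (2/3)).add
    ((hg3d hF t₀ u₀ e₂ e₃ k h).const_mul (1/6))
  exact this.fix (by simp only [Phiddv])

lemma hPhidd : ∀ h, HasDerivAt (Phiddv F t₀ u₀ e₂ e₃ k) (Phidddv F t₀ u₀ e₂ e₃ k h) h := by
  intro h
  have := ((hg2dd hF t₀ u₀ e₂ k h).const_mul (2/3)).add
    ((hg3dd hF t₀ u₀ e₂ e₃ k h).const_mul (1/6))
  exact this.fix (by simp only [Phidddv])

end Deriv2

section VChain
variable {F : ℝ × ℝ → ℝ} (hF : ContDiff ℝ ∞ F) (u : ℝ → ℝ)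
include hF

lemma hv1 {t : ℝ} (ht : HasDerivAt u (v1f F u t) t) :
    HasDerivAt (v1f F u) (v2f F u t) t := by
  exact (hasDerivAt_comp2 hF (hasDerivAt_id t) ht).fix
    (by simp only [v2f, v1f, id_eq]; try ring)

lemma hv2 {t : ℝ} (ht : HasDerivAt u (v1f F u t) t) :
    HasDerivAt (v2f F u) (v3f F u t) t := by
  have c10 := hasDerivAt_comp2 (contDiff_DD hF (1,0)) (hasDerivAt_id t) ht
  have c01 := hasDerivAt_comp2 (contDiff_DD hF (0,1)) (hasDerivAt_id t) ht
  refine ((c10.const_mul 1).add ((hv1 hF u ht).mul c01)).fix ?_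
  simp only [v3f, v1f, id_eq]
  rw [DD_swap hF (0,1) (1,0)]
  try ring

lemma hv3 {t : ℝ} (ht : HasDerivAt u (v1f F u t) t) :
    HasDerivAt (v3f F u) (v4f F u t) t := by
  have c20 := hasDerivAt_comp2 (contDiff_DD (contDiff_DD hF (1,0)) (1,0)) (hasDerivAt_id t) ht
  have c11 := hasDerivAt_comp2 (contDiff_DD (contDiff_DD hF (1,0)) (0,1)) (hasDerivAt_id t) ht
  have c02 := hasDerivAt_comp2 (contDiff_DD (contDiff_DD hF (0,1)) (0,1)) (hasDerivAt_id t) ht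
  have c01 := hasDerivAt_comp2 (contDiff_DD hF (0,1)) (hasDerivAt_id t) ht
  have hA := ((c20.const_mul 1).add ((hv1 hF u ht).mul c11)).const_mul 1
  have hB := ((hv2 hF u ht).mul c01).add
    ((hv1 hF u ht).mul ((c11.const_mul 1).add ((hv1 hF u ht).mul c02)))
  refine (hA.add hB).fix ?_
  simp only [v4f, v1f, id_eq, Pi.mul_apply, Pi.add_apply]
  rw [DD_swap (contDiff_DD hF (1,0)) (0,1) (1,0)]
  rw [show DD (DD (DD F (0,1)) (0,1)) (1,0) = DD (DD (DD F (1,0)) (0,1)) (0,1) by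
    rw [DD_swap (contDiff_DD hF (0,1)) (0,1) (1,0), DD_swap hF (0,1) (1,0)]]
  rw [DD_swap hF (0,1) (1,0)]
  try ring

end VChain

section DiffLemmas
variable {F : ℝ × ℝ → ℝ} (hF : ContDiff ℝ ∞ F) (t₀ u₀ e₂ e₃ k : ℝ)
include hF

omit hF in
lemma y2dddv_diff (h : ℝ) : DifferentiableAt ℝ (y2dddv u₀ e₂) h := by
  have hd := (((((hE2 e₂ h).mul (hw2 e₂ h)).mul (hw2 e₂ h)).mul (hw2 e₂ h)).add
    ((((hE2 e₂ h).mul (hw2 e₂ h)).const_mul 3).mul_const (-(e₂/2)))).const_mul u₀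
  exact hd.differentiableAt.congr_of_eventuallyEq
    (Filter.Eventually.of_forall fun y => by simp only [y2dddv, Pi.mul_apply, Pi.add_apply]; try ring)

lemma g2dddv_diff (h : ℝ) : DifferentiableAt ℝ (g2dddv F t₀ u₀ e₂ k) h := by
  have hxd := (hx2 t₀ h).differentiableAt
  have hyd := (hy2 u₀ e₂ k h).differentiableAt
  have d1 := (hy2d u₀ e₂ k h).differentiableAt
  have d2 := (hy2dd u₀ e₂ h).differentiableAt
  have d3 := y2dddv_diff u₀ e₂ h
  have c300 := differentiableAt_comp2 (contDiff_DD (contDiff_DD (contDiff_DD hF (1,0)) (1,0)) (1,0)) hxd hyd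
  have c210 := differentiableAt_comp2 (contDiff_DD (contDiff_DD (contDiff_DD hF (1,0)) (1,0)) (0,1)) hxd hyd
  have c120 := differentiableAt_comp2 (contDiff_DD (contDiff_DD (contDiff_DD hF (1,0)) (0,1)) (0,1)) hxd hyd
  have c030 := differentiableAt_comp2 (contDiff_DD (contDiff_DD (contDiff_DD hF (0,1)) (0,1)) (0,1)) hxd hyd
  have c110 := differentiableAt_comp2 (contDiff_DD (contDiff_DD hF (1,0)) (0,1)) hxd hyd
  have c020 := differentiableAt_comp2 (contDiff_DD (contDiff_DD hF (0,1)) (0,1)) hxd hyd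
  have c010 := differentiableAt_comp2 (contDiff_DD hF (0,1)) hxd hyd
  have t1 := c300.const_mul (1/8 : ℝ)
  have t2 := ((d1.mul c210)).const_mul (3/4 : ℝ)
  have t3 := (((d1.mul d2)).mul c020).const_mul (3 : ℝ)
  have t4 := (((d1.mul d1)).mul c120).const_mul (3/2 : ℝ)
  have t5 := (((d1.mul d1)).mul d1).mul c030
  have t6 := (d2.mul c110).const_mul (3/2 : ℝ)
  have t7 := d3.mul c010
  exact (t1.add (t2.add (t3.add (t4.add (t5.add (t6.add t7)))))).congr_of_eventuallyEq
    (Filter.Eventually.of_forall fun y => by simp only [g2dddv, P2, Pi.mul_apply, Pi.add_apply]; try ring)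

lemma y3dddv_diff (h : ℝ) : DifferentiableAt ℝ (y3dddv F t₀ u₀ e₂ e₃ k) h := by
  have e1 := ((((hE3 e₃ h).mul (hw3 e₃ h)).mul (hw3 e₃ h)).mul (hw3 e₃ h)).differentiableAt
  have e2' := ((((hE3 e₃ h).mul (hw3 e₃ h)).const_mul 3).mul_const (-(2*e₃))).differentiableAt
  have s2 := (hs3dd hF t₀ u₀ e₂ k h).differentiableAt
  have s3 := (g2dddv_diff hF t₀ u₀ e₂ k h).const_mul (2 : ℝ)
  have hd := ((e1.add e2').const_mul u₀).add ((s2.const_mul 3).add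
    (differentiableAt_fun_id.mul s3))
  exact hd.congr_of_eventuallyEq
    (Filter.Eventually.of_forall fun y => by simp only [y3dddv, s3dddv, Pi.mul_apply, Pi.add_apply]; try ring)

lemma g3dddv_diff (h : ℝ) : DifferentiableAt ℝ (g3dddv F t₀ u₀ e₂ e₃ k) h := by
  have hxd := (hx3 t₀ h).differentiableAt
  have hyd := (hy3 hF t₀ u₀ e₂ e₃ k h).differentiableAt
  have d1 := (hy3d hF t₀ u₀ e₂ e₃ k h).differentiableAt
  have d2 := (hy3dd hF t₀ u₀ e₂ e₃ k h).differentiableAt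
  have d3 := y3dddv_diff hF t₀ u₀ e₂ e₃ k h
  have c300 := differentiableAt_comp2 (contDiff_DD (contDiff_DD (contDiff_DD hF (1,0)) (1,0)) (1,0)) hxd hyd
  have c210 := differentiableAt_comp2 (contDiff_DD (contDiff_DD (contDiff_DD hF (1,0)) (1,0)) (0,1)) hxd hyd
  have c120 := differentiableAt_comp2 (contDiff_DD (contDiff_DD (contDiff_DD hF (1,0)) (0,1)) (0,1)) hxd hyd
  have c030 := differentiableAt_comp2 (contDiff_DD (contDiff_DD (contDiff_DD hF (0,1)) (0,1)) (0,1)) hxd hyd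
  have c110 := differentiableAt_comp2 (contDiff_DD (contDiff_DD hF (1,0)) (0,1)) hxd hyd
  have c020 := differentiableAt_comp2 (contDiff_DD (contDiff_DD hF (0,1)) (0,1)) hxd hyd
  have c010 := differentiableAt_comp2 (contDiff_DD hF (0,1)) hxd hyd
  have t1 := c300
  have t2 := ((d1.mul c210)).const_mul (3 : ℝ)
  have t3 := (((d1.mul d2)).mul c020).const_mul (3 : ℝ)
  have t4 := (((d1.mul d1)).mul c120).const_mul (3 : ℝ)
  have t5 := (((d1.mul d1)).mul d1).mul c030
  have t6 := (d2.mul c110).const_mul (3 : ℝ)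
  have t7 := d3.mul c010
  exact (t1.add (t2.add (t3.add (t4.add (t5.add (t6.add t7)))))).congr_of_eventuallyEq
    (Filter.Eventually.of_forall fun y => by simp only [g3dddv, P3, Pi.mul_apply, Pi.add_apply]; try ring)

lemma Phidddv_diff (h : ℝ) : DifferentiableAt ℝ (Phidddv F t₀ u₀ e₂ e₃ k) h := by
  have := ((g2dddv_diff hF t₀ u₀ e₂ k h).const_mul (2/3 : ℝ)).add
    ((g3dddv_diff hF t₀ u₀ e₂ e₃ k h).const_mul (1/6 : ℝ))
  exact this.congr_of_eventuallyEq
    (Filter.Eventually.of_forall fun y => by simp only [Phidddv, Pi.mul_apply, Pi.add_apply])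

lemma v4f_diff (u : ℝ → ℝ) {t : ℝ} (ht : HasDerivAt u (v1f F u t) t) :
    DifferentiableAt ℝ (v4f F u) t := by
  have hxd : DifferentiableAt ℝ (fun s : ℝ => s) t := differentiableAt_fun_id
  have hyd := ht.differentiableAt
  have d1 := (hv1 hF u ht).differentiableAt
  have d2 := (hv2 hF u ht).differentiableAt
  have d3 := (hv3 hF u ht).differentiableAt
  have c300 := differentiableAt_comp2 (contDiff_DD (contDiff_DD (contDiff_DD hF (1,0)) (1,0)) (1,0)) hxd hyd
  have c210 := differentiableAt_comp2 (contDiff_DD (contDiff_DD (contDiff_DD hF (1,0)) (1,0)) (0,1)) hxd hyd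
  have c120 := differentiableAt_comp2 (contDiff_DD (contDiff_DD (contDiff_DD hF (1,0)) (0,1)) (0,1)) hxd hyd
  have c030 := differentiableAt_comp2 (contDiff_DD (contDiff_DD (contDiff_DD hF (0,1)) (0,1)) (0,1)) hxd hyd
  have c110 := differentiableAt_comp2 (contDiff_DD (contDiff_DD hF (1,0)) (0,1)) hxd hyd
  have c020 := differentiableAt_comp2 (contDiff_DD (contDiff_DD hF (0,1)) (0,1)) hxd hyd
  have c010 := differentiableAt_comp2 (contDiff_DD hF (0,1)) hxd hyd
  have t1 := c300
  have t2 := ((d1.mul c210)).const_mul (3 : ℝ)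
  have t3 := (((d1.mul d2)).mul c020).const_mul (3 : ℝ)
  have t4 := (((d1.mul d1)).mul c120).const_mul (3 : ℝ)
  have t5 := (((d1.mul d1)).mul d1).mul c030
  have t6 := (d2.mul c110).const_mul (3 : ℝ)
  have t7 := d3.mul c010
  exact (t1.add (t2.add (t3.add (t4.add (t5.add (t6.add t7)))))).congr_of_eventuallyEq
    (Filter.Eventually.of_forall fun y => by simp only [v4f, v1f, Pi.mul_apply, Pi.add_apply]; try ring)

end DiffLemmas

section Sections
variable {F : ℝ × ℝ → ℝ} (hF : ContDiff ℝ ∞ F)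
include hF

lemma hasDerivAt_fst_section (t₀ y₀ : ℝ) :
    HasDerivAt (fun s => F (s, y₀)) (DD F (1,0) (t₀, y₀)) t₀ :=
  (hasDerivAt_comp2 hF (hasDerivAt_id t₀) (hasDerivAt_const t₀ y₀)).fix
    (by simp only [id_eq]; ring)

lemma hasDerivAt_snd_section (t₀ y₀ : ℝ) :
    HasDerivAt (fun y => F (t₀, y)) (DD F (0,1) (t₀, y₀)) y₀ :=
  (hasDerivAt_comp2 hF (hasDerivAt_const y₀ t₀) (hasDerivAt_id y₀)).fix
    (by simp only [id_eq]; ring)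

end Sections

section Idents
variable (F : ℝ × ℝ → ℝ) (t₀ u₀ e₂ e₃ : ℝ)

lemma ident0 : Phiv F t₀ u₀ e₂ e₃ (F (t₀, u₀)) 0 = W1 F t₀ u₀ := by
  simp only [Phiv, g2v, g3v, P2, P3, y2v, y3v, E2v, E3v, s3v, W1]
  norm_num
  try ring

lemma ident1 : 2 * Phidv F t₀ u₀ e₂ e₃ (F (t₀, u₀)) 0 = W2 F t₀ u₀ := by
  simp only [Phidv, g2dv, g3dv, P2, P3, y2v, y3v, y2dv, y3dv, E2v, E3v, w2v, w3v,
    s3v, s3dv, g2v, W2, W1]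
  norm_num
  try ring

lemma ident2 (hu₀ : u₀ ≠ 0)
    (he₂ : e₂ = -(DD F (1,0) (t₀,u₀) + DD F (0,1) (t₀,u₀) * F (t₀,u₀)) / (2*u₀))
    (he₃ : e₃ = -e₂) :
    3 * Phiddv F t₀ u₀ e₂ e₃ (F (t₀, u₀)) 0 = W3 F t₀ u₀ := by
  simp only [Phiddv, g2ddv, g3ddv, P2, P3, y2v, y3v, y2dv, y3dv, y2ddv, y3ddv,
    E2v, E3v, w2v, w3v, s3v, s3dv, s3ddv, g2v, g2dv, W3, W2, W1]
  norm_num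
  rw [he₃, he₂]
  field_simp
  ring

lemma ident3 (hu₀ : u₀ ≠ 0)
    (he₂ : e₂ = -(DD F (1,0) (t₀,u₀) + DD F (0,1) (t₀,u₀) * F (t₀,u₀)) / (2*u₀))
    (he₃ : e₃ = -e₂) :
    4 * Phidddv F t₀ u₀ e₂ e₃ (F (t₀, u₀)) 0 = W4 F t₀ u₀ := by
  simp only [Phidddv, g2dddv, g3dddv, P2, P3, y2v, y3v, y2dv, y3dv, y2ddv, y3ddv,
    y2dddv, y3dddv, E2v, E3v, w2v, w3v, s3v, s3dv, s3ddv, s3dddv, g2v, g2dv, g2ddv,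
    g2dddv, W4, W3, W2, W1]
  norm_num
  rw [he₃, he₂]
  field_simp
  ring

end Idents

/-- The three-stage RBF Runge–Kutta method of case I, with `a₂₁ = c₂ = 1/2`,
`a₃₁ = −1`, `a₃₂ = 2`, `c₃ = 1`, `b₁ = 1/6`, `b₂ = 2/3`, `b₃ = 1/6` and shape
parameters `e₂ = −u''(t₀)/(2u₀)`, `e₃ = −e₂`, is fourth-order accurate: the local
truncation error is `O(h⁴)` as `h → 0`. -/
theorem stmt_13 (f : ℝ → ℝ → ℝ)
    (hf : ContDiff ℝ (⊤ : ℕ∞) (fun p : ℝ × ℝ => f p.1 p.2))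
    (t₀ : ℝ) (u : ℝ → ℝ)
    (hu : ∀ᶠ t in 𝓝 t₀, HasDerivAt u (f t (u t)) t)
    (hu₀ : u t₀ ≠ 0)
    (b₁ b₂ b₃ c₂ c₃ a₂₁ a₃₁ a₃₂ : ℝ)
    (hb₁ : b₁ = 1 / 6) (hb₂ : b₂ = 2 / 3) (hb₃ : b₃ = 1 / 6)
    (hc₂ : c₂ = 1 / 2) (hc₃ : c₃ = 1)
    (ha21 : a₂₁ = 1 / 2) (ha31 : a₃₁ = -1) (ha32 : a₃₂ = 2)
    (ft fu e₂ e₃ : ℝ)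
    (hft : ft = deriv (fun s => f s (u t₀)) t₀)
    (hfu : fu = deriv (fun y => f t₀ y) (u t₀))
    (he₂ : e₂ = -(ft + fu * f t₀ (u t₀)) / (2 * u t₀))
    (he₃ : e₃ = -e₂) :
    (fun h : ℝ =>
        (u (t₀ + h) - u t₀) / h
          - (b₁ * f t₀ (u t₀)
             + b₂ * f (t₀ + c₂ * h)
                 (u t₀ * Real.exp (-e₂ * (c₂ * h) ^ 2) + h * (a₂₁ * f t₀ (u t₀)))
             + b₃ * f (t₀ + c₃ * h)
                 (u t₀ * Real.exp (-e₃ * (c₃ * h) ^ 2)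
                   + h * (a₃₁ * f t₀ (u t₀)
                     + a₃₂ * f (t₀ + c₂ * h)
                         (u t₀ * Real.exp (-e₂ * (c₂ * h) ^ 2)
                           + h * (a₂₁ * f t₀ (u t₀)))))))
      =O[𝓝[≠] (0 : ℝ)] fun h => h ^ 4 := by
  subst hb₁ hb₂ hb₃ hc₂ hc₃ ha21 ha31 ha32 hft hfu
  set F : ℝ × ℝ → ℝ := fun p => f p.1 p.2 with hFdef
  have hF : ContDiff ℝ ∞ F := hf.of_le (by simp)
  have hder1 : deriv (fun s => f s (u t₀)) t₀ = DD F (1,0) (t₀, u t₀) :=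
    HasDerivAt.deriv (by exact hasDerivAt_fst_section hF t₀ (u t₀))
  have hder2 : deriv (fun y => f t₀ y) (u t₀) = DD F (0,1) (t₀, u t₀) :=
    HasDerivAt.deriv (by exact hasDerivAt_snd_section hF t₀ (u t₀))
  rw [hder1, hder2] at he₂
  have he₂' : e₂ = -(DD F (1,0) (t₀, u t₀) + DD F (0,1) (t₀, u t₀) * F (t₀, u t₀))
      / (2 * u t₀) := he₂
  -- u-side
  have hU : ∀ᶠ t in 𝓝 t₀, HasDerivAt u (v1f F u t) t := hu
  have hud : HasDerivAt u (v1f F u t₀) t₀ := hU.self_of_nhds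
  have htend : Tendsto (fun h : ℝ => t₀ + h) (𝓝 0) (𝓝 t₀) := by
    simpa using (tendsto_id : Tendsto id (𝓝 (0:ℝ)) (𝓝 0)).const_add t₀
  have hev : ∀ᶠ h in 𝓝 (0:ℝ), HasDerivAt u (v1f F u (t₀ + h)) (t₀ + h) := htend.eventually hU
  have hshift : ∀ h : ℝ, HasDerivAt (fun s : ℝ => t₀ + s) 1 h := fun h =>
    (hasDerivAt_id h).const_add t₀
  have hWv1 : v1f F u t₀ = W1 F t₀ (u t₀) := rfl
  have hWv2 : v2f F u t₀ = W2 F t₀ (u t₀) := rfl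
  have hWv3 : v3f F u t₀ = W3 F t₀ (u t₀) := rfl
  have hWv4 : v4f F u t₀ = W4 F t₀ (u t₀) := rfl
  have hU4O : (fun h : ℝ => v4f F u (t₀ + h) - W4 F t₀ (u t₀)) =O[𝓝 (0:ℝ)]
      fun h => h ^ 1 := by
    apply isBigO_pow_one_of_differentiableAt
    · have h4 : DifferentiableAt ℝ (v4f F u) (t₀ + 0) := by
        rw [add_zero]; exact v4f_diff hF u hud
      exact (h4.comp 0 ((hasDerivAt_const (0:ℝ) t₀).add (hasDerivAt_id 0)).differentiableAt).sub_const _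
    · simp [hWv4]
  have hU3O : (fun h : ℝ => v3f F u (t₀ + h) - (W3 F t₀ (u t₀) + W4 F t₀ (u t₀) * h))
      =O[𝓝 (0:ℝ)] fun h => h ^ 2 := by
    refine isBigO_pow_succ_of_hasDerivAt ?_ (by simp [hWv3]) hU4O
    filter_upwards [hev] with h hh
    have h1 := (hv3 hF u hh).comp h (hshift h)
    have h2 := (hasDerivAt_const h (W3 F t₀ (u t₀))).add
      ((hasDerivAt_id h).const_mul (W4 F t₀ (u t₀)))
    exact (h1.sub h2).fix (by
      try simp only [id_eq]
      try ring)
  have hU2O : (fun h : ℝ => v2f F u (t₀ + h)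
      - (W2 F t₀ (u t₀) + W3 F t₀ (u t₀) * h + W4 F t₀ (u t₀) * (h ^ 2 / 2)))
      =O[𝓝 (0:ℝ)] fun h => h ^ 3 := by
    refine isBigO_pow_succ_of_hasDerivAt ?_ (by simp [hWv2]) hU3O
    filter_upwards [hev] with h hh
    have h1 := (hv2 hF u hh).comp h (hshift h)
    have h2 := ((hasDerivAt_const h (W2 F t₀ (u t₀))).add
      ((hasDerivAt_id h).const_mul (W3 F t₀ (u t₀)))).add
      (((hasDerivAt_pow 2 h).div_const 2).const_mul (W4 F t₀ (u t₀)))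
    exact (h1.sub h2).fix (by
      try simp only [id_eq]
      push_cast
      try ring)
  have hU1O : (fun h : ℝ => v1f F u (t₀ + h)
      - (W1 F t₀ (u t₀) + W2 F t₀ (u t₀) * h + W3 F t₀ (u t₀) * (h ^ 2 / 2)
         + W4 F t₀ (u t₀) * (h ^ 3 / 6)))
      =O[𝓝 (0:ℝ)] fun h => h ^ 4 := by
    refine isBigO_pow_succ_of_hasDerivAt ?_ (by simp [hWv1]) hU2O
    filter_upwards [hev] with h hh
    have h1 := (hv1 hF u hh).comp h (hshift h)
    have h2 := (((hasDerivAt_const h (W1 F t₀ (u t₀))).add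
      ((hasDerivAt_id h).const_mul (W2 F t₀ (u t₀)))).add
      (((hasDerivAt_pow 2 h).div_const 2).const_mul (W3 F t₀ (u t₀)))).add
      (((hasDerivAt_pow 3 h).div_const 6).const_mul (W4 F t₀ (u t₀)))
    exact (h1.sub h2).fix (by
      try simp only [id_eq]
      push_cast
      try ring)
  have hU0O : (fun h : ℝ => u (t₀ + h) - u t₀
      - (W1 F t₀ (u t₀) * h + W2 F t₀ (u t₀) * (h ^ 2 / 2) + W3 F t₀ (u t₀) * (h ^ 3 / 6)
         + W4 F t₀ (u t₀) * (h ^ 4 / 24)))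
      =O[𝓝 (0:ℝ)] fun h => h ^ 5 := by
    refine isBigO_pow_succ_of_hasDerivAt ?_ (by simp) hU1O
    filter_upwards [hev] with h hh
    have h1 := (hh.comp h (hshift h)).sub_const (u t₀)
    have h2 := ((((hasDerivAt_id h).const_mul (W1 F t₀ (u t₀))).add
      (((hasDerivAt_pow 2 h).div_const 2).const_mul (W2 F t₀ (u t₀)))).add
      (((hasDerivAt_pow 3 h).div_const 6).const_mul (W3 F t₀ (u t₀)))).add
      (((hasDerivAt_pow 4 h).div_const 24).const_mul (W4 F t₀ (u t₀)))
    exact (h1.sub h2).fix (by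
      try simp only [id_eq]
      push_cast
      try ring)
  -- Phi-side remainder
  have hR3O : (fun h : ℝ => Phidddv F t₀ (u t₀) e₂ e₃ (F (t₀, u t₀)) h
      - Phidddv F t₀ (u t₀) e₂ e₃ (F (t₀, u t₀)) 0) =O[𝓝 (0:ℝ)] fun h => h ^ 1 := by
    apply isBigO_pow_one_of_differentiableAt
    · exact (Phidddv_diff hF t₀ (u t₀) e₂ e₃ (F (t₀, u t₀)) 0).sub_const _
    · simp
  have hR2O : (fun h : ℝ => Phiddv F t₀ (u t₀) e₂ e₃ (F (t₀, u t₀)) h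
      - (Phiddv F t₀ (u t₀) e₂ e₃ (F (t₀, u t₀)) 0
         + Phidddv F t₀ (u t₀) e₂ e₃ (F (t₀, u t₀)) 0 * h)) =O[𝓝 (0:ℝ)] fun h => h ^ 2 := by
    refine isBigO_pow_succ_of_hasDerivAt ?_ (by simp) hR3O
    refine Filter.Eventually.of_forall fun h => ?_
    have h1 := hPhidd hF t₀ (u t₀) e₂ e₃ (F (t₀, u t₀)) h
    have h2 := (hasDerivAt_const h (Phiddv F t₀ (u t₀) e₂ e₃ (F (t₀, u t₀)) 0)).add
      ((hasDerivAt_id h).const_mul (Phidddv F t₀ (u t₀) e₂ e₃ (F (t₀, u t₀)) 0))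
    exact (h1.sub h2).fix (by
      try simp only [id_eq]
      try ring)
  have hR1O : (fun h : ℝ => Phidv F t₀ (u t₀) e₂ e₃ (F (t₀, u t₀)) h
      - (Phidv F t₀ (u t₀) e₂ e₃ (F (t₀, u t₀)) 0
         + Phiddv F t₀ (u t₀) e₂ e₃ (F (t₀, u t₀)) 0 * h
         + Phidddv F t₀ (u t₀) e₂ e₃ (F (t₀, u t₀)) 0 * (h ^ 2 / 2)))
      =O[𝓝 (0:ℝ)] fun h => h ^ 3 := by
    refine isBigO_pow_succ_of_hasDerivAt ?_ (by simp) hR2O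
    refine Filter.Eventually.of_forall fun h => ?_
    have h1 := hPhid hF t₀ (u t₀) e₂ e₃ (F (t₀, u t₀)) h
    have h2 := ((hasDerivAt_const h (Phidv F t₀ (u t₀) e₂ e₃ (F (t₀, u t₀)) 0)).add
      ((hasDerivAt_id h).const_mul (Phiddv F t₀ (u t₀) e₂ e₃ (F (t₀, u t₀)) 0))).add
      (((hasDerivAt_pow 2 h).div_const 2).const_mul (Phidddv F t₀ (u t₀) e₂ e₃ (F (t₀, u t₀)) 0))
    exact (h1.sub h2).fix (by
      try simp only [id_eq]
      push_cast
      try ring)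
  have hR0O : (fun h : ℝ => Phiv F t₀ (u t₀) e₂ e₃ (F (t₀, u t₀)) h
      - (Phiv F t₀ (u t₀) e₂ e₃ (F (t₀, u t₀)) 0
         + Phidv F t₀ (u t₀) e₂ e₃ (F (t₀, u t₀)) 0 * h
         + Phiddv F t₀ (u t₀) e₂ e₃ (F (t₀, u t₀)) 0 * (h ^ 2 / 2)
         + Phidddv F t₀ (u t₀) e₂ e₃ (F (t₀, u t₀)) 0 * (h ^ 3 / 6)))
      =O[𝓝 (0:ℝ)] fun h => h ^ 4 := by
    refine isBigO_pow_succ_of_hasDerivAt ?_ (by simp) hR1O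
    refine Filter.Eventually.of_forall fun h => ?_
    have h1 := hPhi hF t₀ (u t₀) e₂ e₃ (F (t₀, u t₀)) h
    have h2 := (((hasDerivAt_const h (Phiv F t₀ (u t₀) e₂ e₃ (F (t₀, u t₀)) 0)).add
      ((hasDerivAt_id h).const_mul (Phidv F t₀ (u t₀) e₂ e₃ (F (t₀, u t₀)) 0))).add
      (((hasDerivAt_pow 2 h).div_const 2).const_mul (Phiddv F t₀ (u t₀) e₂ e₃ (F (t₀, u t₀)) 0))).add
      (((hasDerivAt_pow 3 h).div_const 6).const_mul (Phidddv F t₀ (u t₀) e₂ e₃ (F (t₀, u t₀)) 0))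
    exact (h1.sub h2).fix (by
      try simp only [id_eq]
      push_cast
      try ring)
  -- combine
  have hdiv : (fun h : ℝ => (u (t₀ + h) - u t₀
      - (W1 F t₀ (u t₀) * h + W2 F t₀ (u t₀) * (h ^ 2 / 2) + W3 F t₀ (u t₀) * (h ^ 3 / 6)
         + W4 F t₀ (u t₀) * (h ^ 4 / 24))) / h)
      =O[𝓝[≠] (0:ℝ)] fun h => h ^ 4 := by
    have h5 := hU0O.mono (nhdsWithin_le_nhds : 𝓝[≠] (0:ℝ) ≤ 𝓝 0)
    have hm := h5.mul (isBigO_refl (fun h : ℝ => h⁻¹) (𝓝[≠] (0:ℝ)))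
    refine hm.congr' (Filter.Eventually.of_forall fun h => (div_eq_mul_inv _ _).symm) ?_
    filter_upwards [self_mem_nhdsWithin] with h hh
    have hne : h ≠ 0 := hh
    rw [pow_succ, mul_assoc, mul_inv_cancel₀ hne, mul_one]
  have hR := hR0O.mono (nhdsWithin_le_nhds : 𝓝[≠] (0:ℝ) ≤ 𝓝 0)
  refine ((hdiv.sub hR).congr' ?_ EventuallyEq.rfl)
  -- pointwise identification
  have i0 := ident0 F t₀ (u t₀) e₂ e₃
  have i1' := ident1 F t₀ (u t₀) e₂ e₃
  have i2' := ident2 F t₀ (u t₀) e₂ e₃ hu₀ he₂' he₃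
  have i3' := ident3 F t₀ (u t₀) e₂ e₃ hu₀ he₂' he₃
  have i1 : Phidv F t₀ (u t₀) e₂ e₃ (F (t₀, u t₀)) 0 = W2 F t₀ (u t₀) / 2 := by linarith
  have i2 : Phiddv F t₀ (u t₀) e₂ e₃ (F (t₀, u t₀)) 0 = W3 F t₀ (u t₀) / 3 := by linarith
  have i3 : Phidddv F t₀ (u t₀) e₂ e₃ (F (t₀, u t₀)) 0 = W4 F t₀ (u t₀) / 4 := by linarith
  filter_upwards [self_mem_nhdsWithin] with h hh
  have hne : h ≠ 0 := hh
  rw [i0, i1, i2, i3]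
  simp only [Phiv, g2v, g3v, P2, P3, y2v, y3v, E2v, E3v, s3v, hFdef]
  field_simp
  ring
end
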